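/- arXiv:1804.00957 — 5 statements merged into one kernel-verified Lean document; each statement's English description precedes it below -/
import Mathlib

section
/- Let G be a finite graph with at least one edge and let r ≥ 2 be a real number. Then G admits a circular nowhere-zero r-flow if and only if G admits a modular circular nowhere-zero r-flow. -/
open scoped Classical

/-- A finite multigraph: finite vertex and edge types together with a reference
orientation recorded by source and target maps.  The underlying undirected graph
is obtained by forgetting the directions; reorienting an edge corresponds to
negating the value of a flow on it. -/
structure Multigraph where
  V : Type
  E : Type
  [fintypeV : Fintype V]
  [fintypeE : Fintype E]
  src : E → V
  tgt : E → V

attribute [instance] Multigraph.fintypeV Multigraph.fintypeE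

namespace Multigraph

/-- `f` is a flow with respect to the reference orientation: at every vertex the
sum of the values on incoming edges equals the sum on outgoing edges. -/
def IsFlow (G : Multigraph) {M : Type*} [AddCommMonoid M] (f : G.E → M) : Prop :=
  ∀ v : G.V, (∑ e : G.E, Set.indicator {e' : G.E | G.tgt e' = v} f e)
           = ∑ e : G.E, Set.indicator {e' : G.E | G.src e' = v} f e

/-- The edge `e` joins the vertices `v` and `w` (in either direction). -/
def Joins (G : Multigraph) (e : G.E) (v w : G.V) : Prop :=
  (G.src e = v ∧ G.tgt e = w) ∨ (G.src e = w ∧ G.tgt e = v)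

/-- `v` and `w` are adjacent: some edge joins them. -/
def Adj (G : Multigraph) (v w : G.V) : Prop := ∃ e : G.E, G.Joins e v w

/-- The degree of a vertex (loops count twice). -/
noncomputable def degree (G : Multigraph) (v : G.V) : ℕ :=
  Nat.card {e : G.E // G.src e = v} + Nat.card {e : G.E // G.tgt e = v}

/-- A set of edges is an even subgraph if every vertex is incident with an even
number of its edges (loops counting twice). -/
def IsEvenSubgraph (G : Multigraph) (J : Set G.E) : Prop :=
  ∀ v : G.V, Even (Nat.card {e : G.E // e ∈ J ∧ G.src e = v}
    + Nat.card {e : G.E // e ∈ J ∧ G.tgt e = v})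

/-- `G` has a circular nowhere-zero `r`-flow: for some orientation (encoded by
possibly negating values with respect to the reference orientation) there is a
real-valued flow with all values in `[1, r-1]`. -/
def HasCNZF (G : Multigraph) (r : ℝ) : Prop :=
  ∃ f : G.E → ℝ, G.IsFlow f ∧
    ∀ e : G.E, f e ∈ Set.Icc 1 (r - 1) ∨ -f e ∈ Set.Icc 1 (r - 1)

/-- The circular flow number `Φ_c(G)`, as an extended real (`⊤` if no `r`-CNZF
exists for any `r ≥ 2`). -/
noncomputable def flowNumber (G : Multigraph) : EReal :=
  sInf {x : EReal | ∃ r : ℝ, x = (r : EReal) ∧ 2 ≤ r ∧ G.HasCNZF r}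

/-- `G` has a modular circular nowhere-zero `r`-flow: a flow with values in
`ℝ/rℤ` lying (up to reorientation) in the image of `[1, r-1]`. -/
def HasMCNZF (G : Multigraph) (r : ℝ) : Prop :=
  ∃ f : G.E → AddCircle r, G.IsFlow f ∧
    ∀ e : G.E, f e ∈ (fun t : ℝ => (t : AddCircle r)) '' Set.Icc 1 (r - 1) ∨
      -f e ∈ (fun t : ℝ => (t : AddCircle r)) '' Set.Icc 1 (r - 1)

/-- `G` has a sub-`r`-MCNZF: an `r`-MCNZF all of whose values lie in the image
of the open interval `(1, r-1)`. -/
def HasSubMCNZF (G : Multigraph) (r : ℝ) : Prop :=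
  ∃ f : G.E → AddCircle r, G.IsFlow f ∧
    ∀ e : G.E, f e ∈ (fun t : ℝ => (t : AddCircle r)) '' Set.Ioo 1 (r - 1) ∨
      -f e ∈ (fun t : ℝ => (t : AddCircle r)) '' Set.Ioo 1 (r - 1)

end Multigraph

/-- The right endpoint representative: the representative of `b` in `(a, a+5]`. -/
def arcEnd (a b : ℤ) : ℤ := a + (if (b - a) % 5 = 0 then 5 else (b - a) % 5)

/-- The open integer arc `(a, b)` in `ℝ/5ℤ`: the image of the real interval
`(a, b')` where `b'` is the representative of `b` in `(a, a+5]`. -/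
def arc (a b : ℤ) : Set (AddCircle (5 : ℝ)) :=
  (fun t : ℝ => (t : AddCircle (5 : ℝ))) '' Set.Ioo (a : ℝ) (arcEnd a b : ℝ)

/-- `SI_5`: the symmetric subsets of `ℝ/5ℤ` that are unions of open integer arcs. -/
def SI5 : Set (Set (AddCircle (5 : ℝ))) :=
  {A | (∀ z, z ∈ A ↔ -z ∈ A) ∧ ∃ s : Set (ℤ × ℤ), A = ⋃ p ∈ s, arc p.1 p.2}

/-- The measure `Me A`: the number of (distinct) open unit arcs contained in `A`. -/
noncomputable def Me (A : Set (AddCircle (5 : ℝ))) : ℕ :=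
  Set.ncard {B : Set (AddCircle (5 : ℝ)) | B ⊆ A ∧ ∃ k : ℤ, B = arc k (k + 1)}

namespace Multigraph

/-- `G⁺_{xy}`: the graph `G` with one extra edge `e⁺` from `x` to `y`. -/
def addEdge (G : Multigraph) (x y : G.V) : Multigraph where
  V := G.V
  E := Option G.E
  src := fun e => e.elim x G.src
  tgt := fun e => e.elim y G.tgt

/-- The open 5-capacity of the generalised edge `G_{xy}`: all values that can pass
from `x` to `y` through `G` by a modular 5-flow of `G⁺_{xy}` whose values on the
edges of `G` lie in the open arc `(1,4)`. -/
def CP5 (G : Multigraph) (x y : G.V) : Set (AddCircle (5 : ℝ)) :=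
  {w | ∃ f : Option G.E → AddCircle (5 : ℝ),
    (G.addEdge x y).IsFlow f ∧ (∀ e : G.E, f (some e) ∈ arc 1 4) ∧ f none = w}

/-- `G` has a sub-5-MCNZF: a modular 5-flow with all values in the open arc `(1,4)`. -/
def HasSub5 (G : Multigraph) : Prop :=
  ∃ f : G.E → AddCircle (5 : ℝ), G.IsFlow f ∧ ∀ e : G.E, f e ∈ arc 1 4

/-- `G` has a `σ`-faithful flow: a modular 5-flow `f` with `f e ∈ σ e` for all `e`. -/
def HasFaithful (G : Multigraph) (σ : G.E → Set (AddCircle (5 : ℝ))) : Prop :=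
  ∃ f : G.E → AddCircle (5 : ℝ), G.IsFlow f ∧ ∀ e : G.E, f e ∈ σ e

/-- `G` has a `σ_{J,A}`-faithful flow: a modular 5-flow with values in `A` on the
edges of `J` and in the open arc `(1,4)` on all other edges. -/
def HasFaithfulOn (G : Multigraph) (J : Set G.E) (A : Set (AddCircle (5 : ℝ))) : Prop :=
  ∃ f : G.E → AddCircle (5 : ℝ), G.IsFlow f ∧ (∀ e ∈ J, f e ∈ A) ∧ ∀ e ∉ J, f e ∈ arc 1 4

end Multigraph

/-- Cyclic successor on `Fin n`. -/
def rot (n : ℕ) (i : Fin n) : Fin n := ⟨(i.val + 1) % n, Nat.mod_lt _ i.pos⟩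

/-- The wheel `W_n`: the external cycle `v_1 … v_n` (vertices `some i`, rim edges
`Sum.inl i` from `v_i` to `v_{i+1}`) together with a hub `v_c = none` joined to
every rim vertex by the spokes `Sum.inr i`. -/
def wheel (n : ℕ) : Multigraph where
  V := Option (Fin n)
  E := Fin n ⊕ Fin n
  src := fun e => match e with
    | Sum.inl i => some i
    | Sum.inr _ => none
  tgt := fun e => match e with
    | Sum.inl i => some (rot n i)
    | Sum.inr i => some i

namespace CNZF

variable (G : Multigraph) (r : ℝ)

/-- allowed set of real edge values -/
def A (r : ℝ) : Set ℝ := Set.Icc 1 (r-1) ∪ Set.Icc (1-r) (-1)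

/-- vertex excess of a real edge labelling -/
noncomputable def δ (g : G.E → ℝ) (v : G.V) : ℝ :=
  (∑ e : G.E, if G.tgt e = v then g e else 0) - (∑ e : G.E, if G.src e = v then g e else 0)

/-- the integer excess -/
noncomputable def kk (g : G.E → ℝ) (v : G.V) : ℤ := round (δ G g v / r)

/-- a valid lift of a modular flow -/
def IsLift (f : G.E → AddCircle r) (g : G.E → ℝ) : Prop :=
  (∀ e, (g e : AddCircle r) = f e) ∧ ∀ e, g e ∈ A r

/-- measure to minimize -/
noncomputable def meas (g : G.E → ℝ) : ℕ := ∑ v : G.V, (kk G r g v).natAbs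

lemma indicator_eq (s : Set G.E) (g : G.E → ℝ) (e : G.E) :
    Set.indicator s g e = if e ∈ s then g e else 0 := Set.indicator_apply s g e

lemma isFlow_iff_delta (g : G.E → ℝ) : G.IsFlow g ↔ ∀ v, δ G g v = 0 := by
  unfold Multigraph.IsFlow δ
  constructor
  · intro h v; rw [sub_eq_zero]
    simpa [Set.indicator_apply, Set.mem_setOf_eq] using h v
  · intro h v
    have := h v; rw [sub_eq_zero] at this
    simpa [Set.indicator_apply, Set.mem_setOf_eq] using this

lemma delta_cast (f : G.E → AddCircle r) (hf : G.IsFlow f) (g : G.E → ℝ)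
    (hg : ∀ e, (g e : AddCircle r) = f e) (v : G.V) :
    ((δ G g v : ℝ) : AddCircle r) = 0 := by
  have key : ∀ (P : G.E → Prop),
      ((∑ e : G.E, if P e then g e else 0 : ℝ) : AddCircle r)
        = ∑ e : G.E, Set.indicator {e' | P e'} f e := by
    intro P
    rw [show ((∑ e : G.E, if P e then g e else 0 : ℝ) : AddCircle r)
        = (QuotientAddGroup.mk' (AddSubgroup.zmultiples r))
            (∑ e : G.E, if P e then g e else 0) from rfl, map_sum]
    refine Finset.sum_congr rfl fun e _ => ?_
    by_cases he : P e <;> simp [he, Set.indicator_apply, Set.mem_setOf_eq, hg e]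
  have : ((δ G g v : ℝ) : AddCircle r)
      = ((∑ e : G.E, if G.tgt e = v then g e else 0 : ℝ) : AddCircle r)
        - ((∑ e : G.E, if G.src e = v then g e else 0 : ℝ) : AddCircle r) := rfl
  rw [this, key (fun e' => G.tgt e' = v), key (fun e' => G.src e' = v)]
  · rw [sub_eq_zero]; exact hf v

lemma delta_eq_kk (hr : 0 < r) (f : G.E → AddCircle r) (hf : G.IsFlow f) (g : G.E → ℝ)
    (hg : ∀ e, (g e : AddCircle r) = f e) (v : G.V) :
    δ G g v = (kk G r g v) * r := by
  obtain ⟨n, hn⟩ := (AddCircle.coe_eq_zero_iff _).1 (delta_cast G r f hf g hg v)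
  have : δ G g v = n * r := by rw [← hn]; simp [zsmul_eq_mul]
  have h2 : δ G g v / r = n := by rw [this]; field_simp
  unfold kk; rw [h2, round_intCast, this]

end CNZF

namespace CNZF

variable (G : Multigraph) (r : ℝ)

/-- head of an edge in the actual orientation given by sign of g -/
noncomputable def hd (g : G.E → ℝ) (e : G.E) : G.V := if 0 < g e then G.tgt e else G.src e
noncomputable def tl (g : G.E → ℝ) (e : G.E) : G.V := if 0 < g e then G.src e else G.tgt e

/-- a walk along which excess can be pushed -/
inductive Walk (g : G.E → ℝ) : G.V → G.V → List G.E → Prop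
  | nil (v : G.V) : Walk g v v []
  | cons (e : G.E) (w : G.V) (es : List G.E) :
      Walk g (tl G g e) w es → Walk g (hd G g e) w (e :: es)

lemma walk_append (g : G.E → ℝ) (v w : G.V) (l₁ l₂ : List G.E) :
    Walk G g v w (l₁ ++ l₂) ↔ ∃ u, Walk G g v u l₁ ∧ Walk G g u w l₂ := by
  induction l₁ generalizing v with
  | nil =>
    simp only [List.nil_append]
    constructor
    · intro h; exact ⟨v, Walk.nil v, h⟩
    · rintro ⟨u, h1, h2⟩; cases h1; exact h2
  | cons e t ih =>
    constructor
    · intro h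
      rcases h with _ | ⟨e, w, es, h2⟩
      obtain ⟨u, hu1, hu2⟩ := (ih _).1 h2
      exact ⟨u, Walk.cons e u t hu1, hu2⟩
    · rintro ⟨u, h1, h2⟩
      rcases h1 with _ | ⟨e, w', es, h3⟩
      exact Walk.cons e w (t ++ l₂) ((ih _).2 ⟨u, h3, h2⟩)

lemma walk_extend (g : G.E → ℝ) (v w : G.V) (l : List G.E) (e : G.E)
    (hw : Walk G g v w l) (he : hd G g e = w) :
    Walk G g v (tl G g e) (l ++ [e]) := by
  rw [walk_append]
  refine ⟨w, hw, ?_⟩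
  rw [← he]
  exact Walk.cons e _ [] (Walk.nil _)

lemma not_nodup_decomp {α : Type*} (l : List α) (h : ¬ l.Nodup) :
    ∃ (p q s : List α) (x : α), l = p ++ x :: (q ++ x :: s) := by
  induction l with
  | nil => simp at h
  | cons a t ih =>
    by_cases ht : t.Nodup
    · have ha : a ∈ t := by
        by_contra hm
        exact h (List.nodup_cons.2 ⟨hm, ht⟩)
      obtain ⟨q, s, rfl⟩ := List.append_of_mem ha
      exact ⟨[], q, s, a, rfl⟩
    · obtain ⟨p, q, s, x, rfl⟩ := ih ht
      exact ⟨a :: p, q, s, x, rfl⟩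

/-- telescoping sum along a walk -/
lemma walk_telescope (g : G.E → ℝ) (v₀ w v : G.V) (l : List G.E) (hw : Walk G g v₀ w l) :
    (l.map (fun e => (if tl G g e = v then (1:ℝ) else 0) - (if hd G g e = v then 1 else 0))).sum
      = (if w = v then (1:ℝ) else 0) - (if v₀ = v then 1 else 0) := by
  induction hw with
  | nil => simp
  | cons e w es h ih =>
    simp only [List.map_cons, List.sum_cons, ih]
    ring

end CNZF

namespace CNZF

variable (G : Multigraph) (r : ℝ)

noncomputable def flip (g : G.E → ℝ) (l : List G.E) (e : G.E) : ℝ :=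
  if e ∈ l then (if 0 < g e then g e - r else g e + r) else g e

lemma coe_sub_period (x : ℝ) : ((x - r : ℝ) : AddCircle r) = (x : AddCircle r) := by
  have h1 : ((x - r : ℝ) : AddCircle r) = (x : AddCircle r) - ((r:ℝ) : AddCircle r) :=
    AddCircle.coe_sub r x r
  have h2 : ((r:ℝ) : AddCircle r) = 0 := AddCircle.coe_period r
  rw [h1, h2, sub_zero]

lemma coe_add_period (x : ℝ) : ((x + r : ℝ) : AddCircle r) = (x : AddCircle r) := by
  have h1 : ((x + r : ℝ) : AddCircle r) = (x : AddCircle r) + ((r:ℝ) : AddCircle r) :=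
    AddCircle.coe_add r x r
  have h2 : ((r:ℝ) : AddCircle r) = 0 := AddCircle.coe_period r
  rw [h1, h2, add_zero]

lemma mem_A_pos (hr : 0 < r) (x : ℝ) (hx : x ∈ A r) (h : 0 < x) : x ∈ Set.Icc 1 (r-1) := by
  rcases hx with h1 | h1
  · exact h1
  · exfalso; have := h1.2; linarith

lemma mem_A_neg (hr : 0 < r) (x : ℝ) (hx : x ∈ A r) (h : ¬ 0 < x) : x ∈ Set.Icc (1-r) (-1) := by
  rcases hx with h1 | h1
  · exfalso; have := h1.1; linarith
  · exact h1

lemma flip_lift (hr : 0 < r) (f : G.E → AddCircle r) (g : G.E → ℝ) (l : List G.E)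
    (hg : IsLift G r f g) : IsLift G r f (flip G r g l) := by
  obtain ⟨h1, h2⟩ := hg
  constructor
  · intro e
    unfold flip
    split_ifs with he hp
    · rw [coe_sub_period]; exact h1 e
    · rw [coe_add_period]; exact h1 e
    · exact h1 e
  · intro e
    unfold flip
    split_ifs with he hp
    · right
      have := mem_A_pos r hr _ (h2 e) hp
      simp only [Set.mem_Icc] at this ⊢
      exact ⟨by linarith [this.1], by linarith [this.2]⟩
    · left
      have := mem_A_neg r hr _ (h2 e) hp
      simp only [Set.mem_Icc] at this ⊢
      exact ⟨by linarith [this.1], by linarith [this.2]⟩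
    · exact h2 e

lemma flip_delta (g : G.E → ℝ) (l : List G.E) (hnd : l.Nodup) (v₀ w : G.V)
    (hw : Walk G g v₀ w l) (v : G.V) :
    δ G (flip G r g l) v = δ G g v
      + r * ((if w = v then (1:ℝ) else 0) - (if v₀ = v then 1 else 0)) := by
  set φ : G.E → ℝ :=
    fun e => (if tl G g e = v then (1:ℝ) else 0) - (if hd G g e = v then 1 else 0) with hφ
  have key : δ G (flip G r g l) v - δ G g v
      = ∑ e : G.E, if e ∈ l then r * φ e else 0 := by
    unfold δ
    rw [show ∀ a b c d : ℝ, (a - b) - (c - d) = (a - c) - (b - d) by intros; ring]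
    rw [← Finset.sum_sub_distrib, ← Finset.sum_sub_distrib, ← Finset.sum_sub_distrib]
    refine Finset.sum_congr rfl fun e _ => ?_
    simp only [hφ]
    unfold flip hd tl
    split_ifs <;> ring
  have hfil : Finset.univ.filter (fun e => e ∈ l) = l.toFinset := by
    ext e; simp
  have sum_eq : (∑ e : G.E, if e ∈ l then r * φ e else 0)
      = r * ((if w = v then (1:ℝ) else 0) - (if v₀ = v then 1 else 0)) := by
    rw [← Finset.sum_filter, hfil, ← Finset.mul_sum, List.sum_toFinset _ hnd,
      walk_telescope G g v₀ w v l hw]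
  rw [sum_eq] at key
  linarith [key]

end CNZF

namespace CNZF

variable (G : Multigraph) (r : ℝ)

lemma sum_delta_zero (g : G.E → ℝ) : ∑ v : G.V, δ G g v = 0 := by
  unfold δ
  rw [Finset.sum_sub_distrib]
  have key : ∀ (t : G.E → G.V),
      ∑ v : G.V, ∑ e : G.E, (if t e = v then g e else 0) = ∑ e : G.E, g e := by
    intro t
    rw [Finset.sum_comm]
    refine Finset.sum_congr rfl fun e _ => ?_
    simp
  rw [key G.tgt, key G.src, sub_self]

lemma exists_smaller (hr : 2 ≤ r) (f : G.E → AddCircle r) (hf : G.IsFlow f)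
    (g : G.E → ℝ) (hg : IsLift G r f g) (hpos : 0 < meas G r g) :
    ∃ g', IsLift G r f g' ∧ meas G r g' < meas G r g := by
  have hr0 : (0:ℝ) < r := by linarith
  have hrne : r ≠ 0 := ne_of_gt hr0
  have hk : ∀ v, δ G g v = (kk G r g v) * r := delta_eq_kk G r hr0 f hf g hg.1
  -- the integer excesses sum to zero
  have hksum : ∑ v : G.V, kk G r g v = 0 := by
    have h1 : ((∑ v : G.V, kk G r g v : ℤ) : ℝ) * r = 0 := by
      rw [Int.cast_sum, Finset.sum_mul, ← sum_delta_zero G g]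
      exact Finset.sum_congr rfl fun v _ => (hk v).symm
    have h2 : ((∑ v : G.V, kk G r g v : ℤ) : ℝ) = 0 := by
      rcases mul_eq_zero.1 h1 with h | h
      · exact h
      · exact absurd h hrne
    exact_mod_cast h2
  -- some vertex has nonzero excess
  have hne : ∃ v, kk G r g v ≠ 0 := by
    by_contra h
    push_neg at h
    have : meas G r g = 0 := by
      unfold meas
      exact Finset.sum_eq_zero fun v _ => by rw [h v]; rfl
    omega
  -- a vertex with positive excess
  have hv₀ : ∃ v₀, 0 < kk G r g v₀ := by
    by_contra h
    push_neg at h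
    obtain ⟨v, hv⟩ := hne
    exact hv ((Finset.sum_eq_zero_iff_of_nonpos (fun v _ => h v)).1 hksum v (Finset.mem_univ v))
  obtain ⟨v₀, hv₀⟩ := hv₀
  -- values on edges are nonzero
  have hAe : ∀ e, g e ∈ A r := hg.2
  have hgne : ∀ e, g e ≠ 0 := by
    intro e
    rcases hAe e with h | h
    · have := h.1; intro h0; rw [h0] at this; linarith
    · have := h.2; intro h0; rw [h0] at this; linarith
  -- the set of vertices reachable from v₀
  set S : Set G.V := {w | ∃ l, Walk G g v₀ w l} with hS
  have hv₀S : v₀ ∈ S := ⟨[], Walk.nil v₀⟩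
  have hclosed : ∀ e : G.E, hd G g e ∈ S → tl G g e ∈ S := by
    rintro e ⟨l, hl⟩
    exact ⟨l ++ [e], walk_extend G g v₀ (hd G g e) l e hl rfl⟩
  -- sum of excesses over S is nonpositive
  have hcross : ∑ v ∈ Finset.univ.filter (· ∈ S), δ G g v ≤ 0 := by
    have expand : ∑ v ∈ Finset.univ.filter (· ∈ S), δ G g v
        = ∑ e : G.E, ((if G.tgt e ∈ S then g e else 0) - (if G.src e ∈ S then g e else 0)) := by
      unfold δ
      rw [Finset.sum_sub_distrib, Finset.sum_sub_distrib]
      congr 1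
      · rw [Finset.sum_comm]
        refine Finset.sum_congr rfl fun e _ => ?_
        rw [Finset.sum_ite_eq]
        simp
      · rw [Finset.sum_comm]
        refine Finset.sum_congr rfl fun e _ => ?_
        rw [Finset.sum_ite_eq]
        simp
    rw [expand]
    refine Finset.sum_nonpos fun e _ => ?_
    by_cases ht : G.tgt e ∈ S <;> by_cases hs : G.src e ∈ S <;> simp [ht, hs]
    · -- tgt ∈ S, src ∉ S : g e must be negative
      rcases lt_or_gt_of_ne (hgne e) with h | h
      · linarith
      · exfalso
        apply hs
        have h1 : hd G g e = G.tgt e := by unfold hd; rw [if_pos h]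
        have h2 : tl G g e = G.src e := by unfold tl; rw [if_pos h]
        rw [← h2]; exact hclosed e (h1 ▸ ht)
    · -- src ∈ S, tgt ∉ S : g e must be positive
      rcases lt_or_gt_of_ne (hgne e) with h | h
      · exfalso
        apply ht
        have h1 : hd G g e = G.src e := by unfold hd; rw [if_neg (not_lt.2 h.le)]
        have h2 : tl G g e = G.tgt e := by unfold tl; rw [if_neg (not_lt.2 h.le)]
        rw [← h2]; exact hclosed e (h1 ▸ hs)
      · linarith
  -- there is a reachable vertex with negative excess
  have hdef : ∃ w ∈ S, kk G r g w < 0 := by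
    by_contra h
    push_neg at h
    have hge : ∀ v ∈ Finset.univ.filter (· ∈ S), (0:ℝ) ≤ δ G g v := by
      intro v hv
      rw [Finset.mem_filter] at hv
      rw [hk v]
      have h1 : (0:ℝ) ≤ (kk G r g v : ℝ) := by exact_mod_cast h v hv.2
      exact mul_nonneg h1 hr0.le
    have h2 : δ G g v₀ ≤ ∑ v ∈ Finset.univ.filter (· ∈ S), δ G g v :=
      Finset.single_le_sum hge (by simp [hv₀S])
    have h3 : r ≤ δ G g v₀ := by
      rw [hk v₀]
      have : (1:ℝ) ≤ (kk G r g v₀ : ℝ) := by exact_mod_cast hv₀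
      nlinarith
    linarith
  -- take a walk of minimal length to a vertex of negative excess
  have hPex : ∃ n, ∃ w, ∃ l : List G.E, Walk G g v₀ w l ∧ kk G r g w < 0 ∧ l.length = n := by
    obtain ⟨w, ⟨l, hl⟩, hkw⟩ := hdef
    exact ⟨l.length, w, l, hl, hkw, rfl⟩
  classical
  obtain ⟨w, l, hwl, hkw, hlen⟩ := Nat.find_spec hPex
  -- the minimal walk has no repeated edges
  have hnd : l.Nodup := by
    by_contra hnd
    obtain ⟨p, q, s, x, rfl⟩ := not_nodup_decomp l hnd
    obtain ⟨u, hu1, hu2⟩ := (walk_append G g v₀ w p _).1 hwl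
    rcases hu2 with _ | ⟨x, w, es, hu3⟩
    obtain ⟨u', hu4, hu5⟩ := (walk_append G g (tl G g x) w q _).1 hu3
    rcases hu5 with _ | ⟨x, w, es, hu6⟩
    have hshort : Walk G g v₀ w (p ++ x :: s) :=
      (walk_append G g v₀ w p _).2 ⟨hd G g x, hu1, Walk.cons x w s hu6⟩
    have hmem : ∃ w', ∃ l' : List G.E, Walk G g v₀ w' l' ∧ kk G r g w' < 0 ∧
        l'.length = (p ++ x :: s).length := ⟨w, p ++ x :: s, hshort, hkw, rfl⟩
    have hlt : (p ++ x :: s).length < Nat.find hPex := by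
      rw [← hlen]; simp
    exact Nat.find_min hPex hlt hmem
  -- v₀ and w are distinct
  have hvw : v₀ ≠ w := by
    intro h; rw [h] at hv₀; omega
  -- flip the walk
  refine ⟨flip G r g l, flip_lift G r hr0 f g l hg, ?_⟩
  have hδ' : ∀ v, δ G (flip G r g l) v = δ G g v
      + r * ((if w = v then (1:ℝ) else 0) - (if v₀ = v then 1 else 0)) :=
    flip_delta G r g l hnd v₀ w hwl
  -- new integer excesses
  have hk' : ∀ v, kk G r (flip G r g l) v
      = kk G r g v + (if w = v then 1 else 0) - (if v₀ = v then 1 else 0) := by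
    intro v
    have hδv : δ G (flip G r g l) v
        = ((kk G r g v + (if w = v then 1 else 0) - (if v₀ = v then 1 else 0) : ℤ) : ℝ) * r := by
      rw [hδ' v, hk v]
      split_ifs <;> push_cast <;> ring
    unfold kk
    rw [hδv, mul_div_cancel_right₀ _ hrne, round_intCast]
    rfl
  -- the measure strictly decreases
  unfold meas
  refine Finset.sum_lt_sum (fun v _ => ?_) ⟨v₀, Finset.mem_univ v₀, ?_⟩
  · rw [hk' v]
    split_ifs with h1 h2 h2
    · exact absurd (h2.trans h1.symm) hvw
    · subst h1; omega
    · subst h2; omega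
    · omega
  · rw [hk' v₀, if_neg (Ne.symm hvw), if_pos rfl]
    omega

end CNZF

namespace CNZF

variable (G : Multigraph) (r : ℝ)

lemma exists_flow_lift (hr : 2 ≤ r) (f : G.E → AddCircle r) (hf : G.IsFlow f)
    (hex : ∃ g, IsLift G r f g) : ∃ g, IsLift G r f g ∧ ∀ v, δ G g v = 0 := by
  have hr0 : (0:ℝ) < r := by linarith
  have hPex : ∃ n, ∃ g, IsLift G r f g ∧ meas G r g = n := by
    obtain ⟨g, hg⟩ := hex
    exact ⟨meas G r g, g, hg, rfl⟩
  obtain ⟨g, hg, hm⟩ := Nat.find_spec hPex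
  have hzero : meas G r g = 0 := by
    by_contra h
    obtain ⟨g', hg', hlt⟩ := exists_smaller G r hr f hf g hg (Nat.pos_of_ne_zero h)
    have : meas G r g' < Nat.find hPex := by omega
    exact Nat.find_min hPex this ⟨g', hg', rfl⟩
  refine ⟨g, hg, fun v => ?_⟩
  have hk : δ G g v = (kk G r g v) * r := delta_eq_kk G r hr0 f hf g hg.1 v
  have : (kk G r g v).natAbs = 0 := by
    have := Finset.sum_eq_zero_iff.1 hzero v (Finset.mem_univ v)
    exact this
  have : kk G r g v = 0 := by omega
  rw [hk, this]; simp

theorem main (G : Multigraph) (r : ℝ) (hr : 2 ≤ r) :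
    G.HasCNZF r ↔ G.HasMCNZF r := by
  constructor
  · -- forward: quotient a real flow
    rintro ⟨g, hflow, hmem⟩
    refine ⟨fun e => ((g e : ℝ) : AddCircle r), ?_, ?_⟩
    · intro v
      have key : ∀ (P : G.E → Prop),
          (∑ e : G.E, Set.indicator {e' | P e'} (fun e => ((g e : ℝ) : AddCircle r)) e)
            = ((∑ e : G.E, Set.indicator {e' | P e'} g e : ℝ) : AddCircle r) := by
        intro P
        rw [show ((∑ e : G.E, Set.indicator {e' | P e'} g e : ℝ) : AddCircle r)
            = (QuotientAddGroup.mk' (AddSubgroup.zmultiples r))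
                (∑ e : G.E, Set.indicator {e' | P e'} g e) from rfl, map_sum]
        refine Finset.sum_congr rfl fun e _ => ?_
        by_cases he : P e <;>
          simp [Set.indicator_apply, Set.mem_setOf_eq, he]
      rw [show {e' : G.E | G.tgt e' = v} = {e' | (fun e'' => G.tgt e'' = v) e'} from rfl]
      rw [key (fun e'' => G.tgt e'' = v), key (fun e'' => G.src e'' = v)]
      exact congrArg _ (hflow v)
    · intro e
      rcases hmem e with h | h
      · exact Or.inl ⟨g e, h, rfl⟩
      · refine Or.inr ⟨-(g e), h, ?_⟩
        exact (AddCircle.coe_neg (p := r)).symm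
  · -- backward: lift a modular flow
    rintro ⟨f, hflow, hmem⟩
    have hex : ∃ g, IsLift G r f g := by
      have h : ∀ e, ∃ t : ℝ, (t : AddCircle r) = f e ∧ t ∈ A r := by
        intro e
        rcases hmem e with ⟨t, ht, hte⟩ | ⟨t, ht, hte⟩
        · exact ⟨t, hte, Or.inl ht⟩
        · refine ⟨-t, ?_, Or.inr ?_⟩
          · have h1 : ((-t : ℝ) : AddCircle r) = -((t : ℝ) : AddCircle r) :=
              AddCircle.coe_neg (p := r)
            rw [h1, show ((t:ℝ) : AddCircle r) = -f e from hte, neg_neg]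
          · simp only [Set.mem_Icc] at ht ⊢
            exact ⟨by linarith [ht.2], by linarith [ht.1]⟩
      choose g hg1 hg2 using h
      exact ⟨g, hg1, hg2⟩
    obtain ⟨g, hg, hδ⟩ := exists_flow_lift G r hr f hflow hex
    refine ⟨g, (isFlow_iff_delta G g).2 hδ, fun e => ?_⟩
    rcases hg.2 e with h | h
    · exact Or.inl h
    · refine Or.inr ?_
      simp only [Set.mem_Icc] at h ⊢
      exact ⟨by linarith [h.2], by linarith [h.1]⟩

end CNZF


/-- for a finite graph with at least one edge and `r ≥ 2`, a circular
nowhere-zero `r`-flow exists iff a modular circular nowhere-zero `r`-flow exists. -/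
theorem hasCNZF_iff_hasMCNZF (G : Multigraph) (hE : Nonempty G.E) (r : ℝ) (hr : 2 ≤ r) :
    G.HasCNZF r ↔ G.HasMCNZF r := CNZF.main G r hr
end

section
/- Let H be a finite graph and σ a capacity function assigning to each edge e of H a set σ(e) ∈ SI_5. Let G be a finite graph obtained from H by replacing every edge e = uv of H by a generalised edge with terminals u and v whose open 5-capacity equals σ(e), where the replacement graphs are pairwise vertex-disjoint except possibly at shared terminals (the vertices of H). Then G admits a sub-5-MCNZF if and only if H admits a σ-faithful flow, i.e. a modular 5-flow f on H with f(e) ∈ σ(e) for every edge e of H. -/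
open scoped Classical

/-- The gluing relation identifying, for each edge `e` of `H`, the terminal `x e`
of the replacement graph `K e` with `src e` and the terminal `y e` with `tgt e`. -/
def GlueRel (H : Multigraph) (K : H.E → Multigraph) (x y : ∀ e : H.E, (K e).V) :
    (H.V ⊕ (Σ e : H.E, (K e).V)) → (H.V ⊕ (Σ e : H.E, (K e).V)) → Prop :=
  fun a b =>
    (∃ e : H.E, a = Sum.inl (H.src e) ∧ b = Sum.inr ⟨e, x e⟩) ∨
    (∃ e : H.E, a = Sum.inl (H.tgt e) ∧ b = Sum.inr ⟨e, y e⟩)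

/-- The graph obtained from `H` by replacing every edge `e` by the generalised
edge `(K e, x e, y e)`; the replacement graphs are pairwise disjoint and meet the
vertices of `H` only at the identified terminals. -/
noncomputable def glue (H : Multigraph) (K : H.E → Multigraph)
    (x y : ∀ e : H.E, (K e).V) : Multigraph :=
  { V := Quot (GlueRel H K x y)
    E := Σ e : H.E, (K e).E
    fintypeV := Fintype.ofFinite _
    fintypeE := inferInstance
    src := fun a => Quot.mk _ (Sum.inr ⟨a.1, (K a.1).src a.2⟩)
    tgt := fun a => Quot.mk _ (Sum.inr ⟨a.1, (K a.1).tgt a.2⟩) }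

section GlueProofAux

private lemma isFlow_iff' (G : Multigraph) {M : Type*} [AddCommMonoid M] (f : G.E → M) :
    G.IsFlow f ↔ ∀ v : G.V,
      (∑ e : G.E, if G.tgt e = v then f e else 0)
        = ∑ e : G.E, if G.src e = v then f e else 0 := by
  simp only [Multigraph.IsFlow, Set.indicator_apply, Set.mem_setOf_eq]

private lemma ite_or_split {P Q : Prop} (h : P → Q → False) (z : AddCircle (5 : ℝ)) :
    (if P ∨ Q then z else 0) = (if P then z else 0) + (if Q then z else 0) := by
  by_cases hP : P
  · by_cases hQ : Q
    · exact absurd hQ (h hP)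
    · simp [hP, hQ]
  · simp [hP]

private lemma sum_ite_and {α : Type} [Fintype α] (A : α → Prop) (c : Prop)
    (z : α → AddCircle (5 : ℝ)) :
    (∑ a : α, if A a ∧ c then z a else 0)
      = if c then ∑ a : α, (if A a then z a else 0) else 0 := by
  by_cases hc : c <;> simp [hc]

variable {H : Multigraph} {K : H.E → Multigraph} {x y : ∀ e : H.E, (K e).V}

/-- Normal form for the gluing relation. -/
private noncomputable def nf (x y : ∀ e : H.E, (K e).V) :
    (H.V ⊕ (Σ e : H.E, (K e).V)) → (H.V ⊕ (Σ e : H.E, (K e).V))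
  | Sum.inl u => Sum.inl u
  | Sum.inr ⟨e, v⟩ =>
      if v = x e then Sum.inl (H.src e)
      else if v = y e then Sum.inl (H.tgt e)
      else Sum.inr ⟨e, v⟩

private lemma glueRel_nf (hxy : ∀ e : H.E, x e ≠ y e) :
    ∀ a b, GlueRel H K x y a b → nf x y a = nf x y b := by
  rintro a b (⟨e, rfl, rfl⟩ | ⟨e, rfl, rfl⟩)
  · simp [nf]
  · simp [nf, Ne.symm (hxy e)]

private lemma mk_nf (a : H.V ⊕ (Σ e : H.E, (K e).V)) :
    Quot.mk (GlueRel H K x y) (nf x y a) = Quot.mk (GlueRel H K x y) a := by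
  rcases a with u | ⟨e, v⟩
  · rfl
  · by_cases h1 : v = x e
    · subst h1
      rw [show nf x y (Sum.inr ⟨e, x e⟩) = Sum.inl (H.src e) by simp [nf]]
      exact Quot.sound (Or.inl ⟨e, rfl, rfl⟩)
    · by_cases h2 : v = y e
      · subst h2
        rw [show nf x y (Sum.inr ⟨e, y e⟩) = Sum.inl (H.tgt e) by simp [nf, h1]]
        exact Quot.sound (Or.inr ⟨e, rfl, rfl⟩)
      · rw [show nf x y (Sum.inr ⟨e, v⟩) = Sum.inr ⟨e, v⟩ by simp [nf, h1, h2]]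

private lemma mk_eq_mk (hxy : ∀ e : H.E, x e ≠ y e) {a b : H.V ⊕ (Σ e : H.E, (K e).V)} :
    Quot.mk (GlueRel H K x y) a = Quot.mk (GlueRel H K x y) b ↔ nf x y a = nf x y b := by
  constructor
  · intro h
    exact congrArg (Quot.lift (nf x y) (glueRel_nf hxy)) h
  · intro h
    rw [← mk_nf a, ← mk_nf b, h]

private lemma sumA (hxy : ∀ e : H.E, x e ≠ y e) (t : ∀ e : H.E, (K e).E → (K e).V)
    (g : (Σ e : H.E, (K e).E) → AddCircle (5 : ℝ)) (e₀ : H.E) (v : (K e₀).V)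
    (h1 : v ≠ x e₀) (h2 : v ≠ y e₀) :
    (∑ p : Σ e : H.E, (K e).E,
        if Quot.mk (GlueRel H K x y) (Sum.inr ⟨p.1, t p.1 p.2⟩)
            = Quot.mk (GlueRel H K x y) (Sum.inr ⟨e₀, v⟩) then g p else 0)
      = ∑ a : (K e₀).E, if t e₀ a = v then g ⟨e₀, a⟩ else 0 := by
  have hnfv : nf x y (Sum.inr ⟨e₀, v⟩) = Sum.inr ⟨e₀, v⟩ := by simp [nf, h1, h2]
  rw [← Finset.univ_sigma_univ, Finset.sum_sigma]
  rw [Finset.sum_eq_single_of_mem e₀ (Finset.mem_univ _) ?h0]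
  · refine Finset.sum_congr rfl fun a _ => ?_
    by_cases h : t e₀ a = v
    · rw [if_pos (by rw [h]), if_pos h]
    · rw [if_neg h, if_neg]
      intro hC
      rw [mk_eq_mk hxy, hnfv] at hC
      by_cases hx : t e₀ a = x e₀
      · simp [nf, hx] at hC
      · by_cases hy : t e₀ a = y e₀
        · simp [nf, hx, hy, Ne.symm (hxy e₀)] at hC
        · simp [nf, hx, hy] at hC
          exact h hC
  case h0 =>
    intro e _ hne
    refine Finset.sum_eq_zero fun a _ => ?_
    rw [if_neg]
    intro hC
    rw [mk_eq_mk hxy, hnfv] at hC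
    by_cases hx : t e a = x e
    · simp [nf, hx] at hC
    · by_cases hy : t e a = y e
      · simp [nf, hx, hy, Ne.symm (hxy e)] at hC
      · simp [nf, hx, hy] at hC
        exact hne hC.1

private lemma sumB (hxy : ∀ e : H.E, x e ≠ y e) (t : ∀ e : H.E, (K e).E → (K e).V)
    (g : (Σ e : H.E, (K e).E) → AddCircle (5 : ℝ)) (u : H.V) :
    (∑ p : Σ e : H.E, (K e).E,
        if Quot.mk (GlueRel H K x y) (Sum.inr ⟨p.1, t p.1 p.2⟩)
            = Quot.mk (GlueRel H K x y) (Sum.inl u) then g p else 0)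
      = ∑ e : H.E,
          ((if H.src e = u then ∑ a : (K e).E, (if t e a = x e then g ⟨e, a⟩ else 0) else 0)
            + if H.tgt e = u then ∑ a : (K e).E, (if t e a = y e then g ⟨e, a⟩ else 0) else 0) := by
  rw [← Finset.univ_sigma_univ, Finset.sum_sigma]
  refine Finset.sum_congr rfl fun e _ => ?_
  have hcond : ∀ a : (K e).E,
      (Quot.mk (GlueRel H K x y) (Sum.inr ⟨e, t e a⟩)
          = Quot.mk (GlueRel H K x y) (Sum.inl u))
        ↔ ((t e a = x e ∧ H.src e = u) ∨ (t e a = y e ∧ H.tgt e = u)) := by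
    intro a
    rw [mk_eq_mk hxy]
    by_cases hx : t e a = x e
    · simp [nf, hx, hxy e]
    · by_cases hy : t e a = y e
      · simp [nf, hx, hy, Ne.symm (hxy e)]
      · simp [nf, hx, hy]
  calc (∑ a : (K e).E,
        if Quot.mk (GlueRel H K x y) (Sum.inr ⟨e, t e a⟩)
            = Quot.mk (GlueRel H K x y) (Sum.inl u) then g ⟨e, a⟩ else 0)
      = ∑ a : (K e).E, ((if t e a = x e ∧ H.src e = u then g ⟨e, a⟩ else 0)
          + if t e a = y e ∧ H.tgt e = u then g ⟨e, a⟩ else 0) := by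
        refine Finset.sum_congr rfl fun a _ => ?_
        by_cases hxa : t e a = x e ∧ H.src e = u
        · rw [if_pos ((hcond a).2 (Or.inl hxa)), if_pos hxa,
            if_neg (fun hya => hxy e (hxa.1.symm.trans hya.1)), add_zero]
        · by_cases hya : t e a = y e ∧ H.tgt e = u
          · rw [if_pos ((hcond a).2 (Or.inr hya)), if_neg hxa, if_pos hya, zero_add]
          · rw [if_neg (fun hC => (((hcond a).1 hC).elim hxa hya)), if_neg hxa, if_neg hya,
              add_zero]
    _ = _ := by
        rw [Finset.sum_add_distrib]
        congr 1
        · exact sum_ite_and _ _ _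
        · exact sum_ite_and _ _ _

end GlueProofAux

set_option maxHeartbeats 1000000 in
/-- a graph obtained from `H` by replacing each edge `e = uv` by a
generalised edge with terminals `u, v` and open 5-capacity `σ e ∈ SI_5` admits a
sub-5-MCNZF iff `H` admits a `σ`-faithful flow. -/
theorem glue_hasSub5_iff_hasFaithful (H : Multigraph)
    (σ : H.E → Set (AddCircle (5 : ℝ))) (hσ : ∀ e : H.E, σ e ∈ SI5)
    (K : H.E → Multigraph) (x y : ∀ e : H.E, (K e).V)
    (hxy : ∀ e : H.E, x e ≠ y e)
    (hcap : ∀ e : H.E, (K e).CP5 (x e) (y e) = σ e) :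
    (glue H K x y).HasSub5 ↔ H.HasFaithful σ := by
  constructor
  · rintro ⟨g, hg, hgarc⟩
    rw [isFlow_iff'] at hg
    have hint : ∀ (e : H.E) (v : (K e).V), v ≠ x e → v ≠ y e →
        (∑ a : (K e).E, if (K e).tgt a = v then g ⟨e, a⟩ else 0)
          = ∑ a : (K e).E, if (K e).src a = v then g ⟨e, a⟩ else 0 := by
      intro e v h1 h2
      exact ((sumA hxy (fun e a => (K e).tgt a) (fun p => g p) e v h1 h2).symm.trans
        (hg (Quot.mk _ (Sum.inr ⟨e, v⟩)))).trans
          (sumA hxy (fun e a => (K e).src a) (fun p => g p) e v h1 h2)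
    have hinl : ∀ u : H.V,
        (∑ e : H.E, ((if H.src e = u then
            ∑ a : (K e).E, (if (K e).tgt a = x e then g ⟨e, a⟩ else 0) else 0)
          + if H.tgt e = u then
            ∑ a : (K e).E, (if (K e).tgt a = y e then g ⟨e, a⟩ else 0) else 0))
        = ∑ e : H.E, ((if H.src e = u then
            ∑ a : (K e).E, (if (K e).src a = x e then g ⟨e, a⟩ else 0) else 0)
          + if H.tgt e = u then
            ∑ a : (K e).E, (if (K e).src a = y e then g ⟨e, a⟩ else 0) else 0) :=
      fun u => ((sumB hxy (fun e a => (K e).tgt a) (fun p => g p) u).symm.trans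
        (hg (Quot.mk _ (Sum.inl u)))).trans (sumB hxy (fun e a => (K e).src a) (fun p => g p) u)
    have hkey : ∀ e : H.E,
        ((∑ a : (K e).E, if (K e).tgt a = x e then g ⟨e, a⟩ else 0)
          - ∑ a : (K e).E, if (K e).src a = x e then g ⟨e, a⟩ else 0)
        + ((∑ a : (K e).E, if (K e).tgt a = y e then g ⟨e, a⟩ else 0)
          - ∑ a : (K e).E, if (K e).src a = y e then g ⟨e, a⟩ else 0) = 0 := by
      intro e
      have t1 : (∑ v : (K e).V, ∑ a : (K e).E, if (K e).tgt a = v then g ⟨e, a⟩ else 0)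
          = ∑ a : (K e).E, g ⟨e, a⟩ := by
        rw [Finset.sum_comm]; simp
      have t2 : (∑ v : (K e).V, ∑ a : (K e).E, if (K e).src a = v then g ⟨e, a⟩ else 0)
          = ∑ a : (K e).E, g ⟨e, a⟩ := by
        rw [Finset.sum_comm]; simp
      have htel : (∑ v : (K e).V,
          ((∑ a : (K e).E, if (K e).tgt a = v then g ⟨e, a⟩ else 0)
            - ∑ a : (K e).E, if (K e).src a = v then g ⟨e, a⟩ else 0)) = 0 := by
        rw [Finset.sum_sub_distrib, t1, t2, sub_self]
      have hsplit : ∀ v : (K e).V,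
          ((∑ a : (K e).E, if (K e).tgt a = v then g ⟨e, a⟩ else 0)
            - ∑ a : (K e).E, if (K e).src a = v then g ⟨e, a⟩ else 0)
          = (if v = x e then ((∑ a : (K e).E, if (K e).tgt a = x e then g ⟨e, a⟩ else 0)
              - ∑ a : (K e).E, if (K e).src a = x e then g ⟨e, a⟩ else 0) else 0)
            + (if v = y e then ((∑ a : (K e).E, if (K e).tgt a = y e then g ⟨e, a⟩ else 0)
              - ∑ a : (K e).E, if (K e).src a = y e then g ⟨e, a⟩ else 0) else 0) := by
        intro v
        by_cases h1 : v = x e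
        · subst h1
          rw [if_pos rfl, if_neg (hxy e), add_zero]
        · by_cases h2 : v = y e
          · subst h2
            rw [if_neg h1, if_pos rfl, zero_add]
          · rw [if_neg h1, if_neg h2, add_zero, hint e v h1 h2, sub_self]
      have h5 := (Finset.sum_congr rfl
        (fun v (_ : v ∈ Finset.univ) => (hsplit v).symm)).trans htel
      rw [Finset.sum_add_distrib] at h5
      simp only [Finset.sum_ite_eq', Finset.mem_univ, if_true] at h5
      exact h5
    refine ⟨fun e => (∑ a : (K e).E, if (K e).tgt a = x e then g ⟨e, a⟩ else 0)
        - ∑ a : (K e).E, if (K e).src a = x e then g ⟨e, a⟩ else 0, ?_, ?_⟩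
    · rw [isFlow_iff']
      intro u
      rw [← sub_eq_zero, ← Finset.sum_sub_distrib]
      have hAB := sub_eq_zero.mpr (hinl u).symm
      rw [← Finset.sum_sub_distrib] at hAB
      refine Eq.trans (Finset.sum_congr rfl fun e _ => ?_) hAB
      have hk := hkey e
      by_cases hs : H.src e = u
      · by_cases ht : H.tgt e = u
        · simp only [hs, ht, eq_self_iff_true, if_true, ite_true]
          rw [← sub_eq_zero]
          conv_rhs => rw [← hk]
          abel
        · simp only [hs, ht, eq_self_iff_true, if_true, if_false, iff_false, ite_true, ite_false]
          abel
      · by_cases ht : H.tgt e = u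
        · simp only [hs, ht, eq_self_iff_true, if_true, if_false, iff_false, ite_true, ite_false]
          rw [← sub_eq_zero]
          conv_rhs => rw [← hk]
          abel
        · simp only [hs, ht, if_false, iff_false, ite_false]
          abel
    · intro e
      rw [← hcap e]
      simp only [Multigraph.CP5, Set.mem_setOf_eq]
      refine ⟨fun o => Option.casesOn o
          ((∑ a : (K e).E, if (K e).tgt a = x e then g ⟨e, a⟩ else 0)
            - ∑ a : (K e).E, if (K e).src a = x e then g ⟨e, a⟩ else 0)
          (fun a => g ⟨e, a⟩), ?_, fun a => hgarc ⟨e, a⟩, rfl⟩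
      refine (isFlow_iff' _ _).2 ?_
      intro v
      show (∑ o : Option (K e).E,
          if ((K e).addEdge (x e) (y e)).tgt o = v then
            (Option.casesOn o
              ((∑ a : (K e).E, if (K e).tgt a = x e then g ⟨e, a⟩ else 0)
                - ∑ a : (K e).E, if (K e).src a = x e then g ⟨e, a⟩ else 0)
              (fun a => g ⟨e, a⟩) : AddCircle (5 : ℝ)) else 0)
        = ∑ o : Option (K e).E,
          if ((K e).addEdge (x e) (y e)).src o = v then
            (Option.casesOn o
              ((∑ a : (K e).E, if (K e).tgt a = x e then g ⟨e, a⟩ else 0)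
                - ∑ a : (K e).E, if (K e).src a = x e then g ⟨e, a⟩ else 0)
              (fun a => g ⟨e, a⟩) : AddCircle (5 : ℝ)) else 0
      rw [Fintype.sum_option, Fintype.sum_option]
      show ((if y e = v then ((∑ a : (K e).E, if (K e).tgt a = x e then g ⟨e, a⟩ else 0)
            - ∑ a : (K e).E, if (K e).src a = x e then g ⟨e, a⟩ else 0) else 0)
          + ∑ a : (K e).E, if (K e).tgt a = v then g ⟨e, a⟩ else 0)
        = (if x e = v then ((∑ a : (K e).E, if (K e).tgt a = x e then g ⟨e, a⟩ else 0)
            - ∑ a : (K e).E, if (K e).src a = x e then g ⟨e, a⟩ else 0) else 0)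
          + ∑ a : (K e).E, if (K e).src a = v then g ⟨e, a⟩ else 0
      by_cases h1 : v = x e
      · subst h1
        rw [if_neg (Ne.symm (hxy e)), if_pos rfl, zero_add]
        abel
      · by_cases h2 : v = y e
        · subst h2
          rw [if_pos rfl, if_neg (hxy e), zero_add]
          rw [← sub_eq_zero]
          conv_rhs => rw [← hkey e]
          abel
        · rw [if_neg (fun hh => h2 hh.symm), if_neg (fun hh => h1 hh.symm), zero_add, zero_add]
          exact hint e v h1 h2
  · rintro ⟨f, hf, hfσ⟩
    rw [isFlow_iff'] at hf
    have hch : ∀ e : H.E, ∃ gE : Option (K e).E → AddCircle (5 : ℝ),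
        ((K e).addEdge (x e) (y e)).IsFlow gE ∧ (∀ a : (K e).E, gE (some a) ∈ arc 1 4)
          ∧ gE none = f e := by
      intro e
      have h := hfσ e
      rw [← hcap e] at h
      exact h
    choose gE hgflow hgarcs hgnone using hch
    refine ⟨fun p => gE p.1 (some p.2), ?_, fun p => hgarcs p.1 p.2⟩
    rw [isFlow_iff']
    have hfacts : ∀ (e : H.E) (w : (K e).V),
        ((if y e = w then f e else 0)
            + ∑ a : (K e).E, if (K e).tgt a = w then gE e (some a) else 0)
          = (if x e = w then f e else 0)
            + ∑ a : (K e).E, if (K e).src a = w then gE e (some a) else 0 := by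
      intro e w
      have h := (isFlow_iff' ((K e).addEdge (x e) (y e)) (gE e)).1 (hgflow e) w
      have h' : (∑ o : Option (K e).E,
            if ((K e).addEdge (x e) (y e)).tgt o = w then gE e o else 0)
          = ∑ o : Option (K e).E,
            if ((K e).addEdge (x e) (y e)).src o = w then gE e o else 0 := h
      rw [Fintype.sum_option, Fintype.sum_option] at h'
      have h2 : ((if y e = w then gE e none else 0)
            + ∑ a : (K e).E, if (K e).tgt a = w then gE e (some a) else 0)
          = (if x e = w then gE e none else 0)
            + ∑ a : (K e).E, if (K e).src a = w then gE e (some a) else 0 := h'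
      rwa [hgnone e] at h2
    have main_inr : ∀ (e : H.E) (w : (K e).V), w ≠ x e → w ≠ y e →
        (∑ p : Σ e : H.E, (K e).E,
            if Quot.mk (GlueRel H K x y) (Sum.inr ⟨p.1, (K p.1).tgt p.2⟩)
                = Quot.mk (GlueRel H K x y) (Sum.inr ⟨e, w⟩) then gE p.1 (some p.2) else 0)
          = ∑ p : Σ e : H.E, (K e).E,
            if Quot.mk (GlueRel H K x y) (Sum.inr ⟨p.1, (K p.1).src p.2⟩)
                = Quot.mk (GlueRel H K x y) (Sum.inr ⟨e, w⟩) then gE p.1 (some p.2) else 0 := by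
      intro e w h1 h2
      refine ((sumA hxy (fun e a => (K e).tgt a) (fun p => gE p.1 (some p.2)) e w h1 h2).trans
        ?_).trans (sumA hxy (fun e a => (K e).src a) (fun p => gE p.1 (some p.2)) e w h1 h2).symm
      have h := hfacts e w
      rwa [if_neg (fun hh => h2 hh.symm), if_neg (fun hh => h1 hh.symm), zero_add, zero_add] at h
    have main_inl : ∀ u : H.V,
        (∑ p : Σ e : H.E, (K e).E,
            if Quot.mk (GlueRel H K x y) (Sum.inr ⟨p.1, (K p.1).tgt p.2⟩)
                = Quot.mk (GlueRel H K x y) (Sum.inl u) then gE p.1 (some p.2) else 0)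
          = ∑ p : Σ e : H.E, (K e).E,
            if Quot.mk (GlueRel H K x y) (Sum.inr ⟨p.1, (K p.1).src p.2⟩)
                = Quot.mk (GlueRel H K x y) (Sum.inl u) then gE p.1 (some p.2) else 0 := by
      intro u
      refine ((sumB hxy (fun e a => (K e).tgt a) (fun p => gE p.1 (some p.2)) u).trans
        ?_).trans (sumB hxy (fun e a => (K e).src a) (fun p => gE p.1 (some p.2)) u).symm
      rw [← sub_eq_zero, ← Finset.sum_sub_distrib]
      have hzero : (∑ e : H.E,
          ((if H.src e = u then f e else 0) - if H.tgt e = u then f e else 0)) = 0 := by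
        rw [Finset.sum_sub_distrib, sub_eq_zero]
        exact (hf u).symm
      refine Eq.trans (Finset.sum_congr rfl fun e _ => ?_) hzero
      have hx := hfacts e (x e)
      rw [if_neg (Ne.symm (hxy e)), if_pos rfl, zero_add] at hx
      have hy := hfacts e (y e)
      rw [if_pos rfl, if_neg (hxy e), zero_add] at hy
      by_cases hs : H.src e = u
      · by_cases ht : H.tgt e = u
        · simp only [hs, ht, eq_self_iff_true, if_true, ite_true]
          rw [hx, ← hy]
          abel
        · simp only [hs, ht, eq_self_iff_true, if_true, if_false, iff_false, ite_true, ite_false]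
          rw [hx]
          abel
      · by_cases ht : H.tgt e = u
        · simp only [hs, ht, eq_self_iff_true, if_true, if_false, iff_false, ite_true, ite_false]
          rw [← hy]
          abel
        · simp only [hs, ht, if_false, iff_false, ite_false]
          abel
    intro v
    induction v using Quot.ind with
    | _ a =>
      rcases a with u | ⟨e, w⟩
      · exact main_inl u
      · by_cases h1 : w = x e
        · subst h1
          have hq : Quot.mk (GlueRel H K x y) (Sum.inl (H.src e))
              = Quot.mk (GlueRel H K x y) (Sum.inr ⟨e, x e⟩) :=
            Quot.sound (Or.inl ⟨e, rfl, rfl⟩)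
          rw [← hq]
          exact main_inl (H.src e)
        · by_cases h2 : w = y e
          · subst h2
            have hq : Quot.mk (GlueRel H K x y) (Sum.inl (H.tgt e))
                = Quot.mk (GlueRel H K x y) (Sum.inr ⟨e, y e⟩) :=
              Quot.sound (Or.inr ⟨e, rfl, rfl⟩)
            rw [← hq]
            exact main_inl (H.tgt e)
          · exact main_inr e w h1 h2
end

section
/- Let G be the graph obtained from the complete graph K_4 by deleting one edge uv, viewed as a generalised edge with terminals u and v (so that G⁺_{uv} = K_4). Then CP_5(G_{uv}) = ℝ/5ℤ ∖ {2, 3}, where 2 and 3 denote the images of the integers 2 and 3 in ℝ/5ℤ. -/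
open scoped Classical

/-- `K_4` minus the edge `uv`, with `u = 0`, `v = 1`, `s = 2`, `t = 3`; the five
edges are `us, ut, vs, vt, st`.  Adding the extra edge `e⁺ = uv` gives `K_4`. -/
def K4minus : Multigraph where
  V := Fin 4
  E := Fin 5
  src := ![0, 0, 1, 1, 2]
  tgt := ![2, 3, 2, 3, 3]


section CP5Aux

lemma coe_eq_coe5 (x y : ℝ) :
    (x : AddCircle (5:ℝ)) = (y : AddCircle (5:ℝ)) ↔ ∃ n : ℤ, x - y = 5 * n := by
  rw [← sub_eq_zero, ← AddCircle.coe_sub, AddCircle.coe_eq_zero_iff]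
  constructor
  · rintro ⟨n, hn⟩; exact ⟨n, by rw [← hn, zsmul_eq_mul]; ring⟩
  · rintro ⟨n, hn⟩; exact ⟨n, by rw [hn, zsmul_eq_mul]; ring⟩

lemma coe_eq_zero5 (x : ℝ) (n : ℤ) (h : x = 5 * n) : (x : AddCircle (5:ℝ)) = 0 :=
  (AddCircle.coe_eq_zero_iff (5:ℝ)).mpr ⟨n, by rw [zsmul_eq_mul]; linarith⟩

lemma coe_eq_of5 (x y : ℝ) (n : ℤ) (h : x = y + 5 * n) : (x : AddCircle (5:ℝ)) = y :=
  (coe_eq_coe5 x y).mpr ⟨n, by linarith⟩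

lemma exists_rep5 (w : AddCircle (5:ℝ)) : ∃ a : ℝ, 0 ≤ a ∧ a < 5 ∧ (a : AddCircle (5:ℝ)) = w := by
  induction w using QuotientAddGroup.induction_on with
  | H x =>
    refine ⟨x - 5 * ⌊x / 5⌋, ?_, ?_, ?_⟩
    · have := Int.floor_le (x / 5); linarith
    · have := Int.lt_floor_add_one (x / 5); linarith
    · exact coe_eq_of5 _ _ (-⌊x / 5⌋) (by push_cast; ring)

lemma mem_arc14 {z : AddCircle (5:ℝ)} :
    z ∈ arc 1 4 ↔ ∃ t : ℝ, (1 < t ∧ t < 4) ∧ (t : AddCircle (5:ℝ)) = z := by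
  have h : arcEnd 1 4 = 4 := by decide
  simp only [arc, h, Set.mem_image, Set.mem_Ioo]
  norm_num

lemma isFlow_iff5 (f : Option K4minus.E → AddCircle (5:ℝ)) :
    (K4minus.addEdge (0 : Fin 4) (1 : Fin 4)).IsFlow f ↔
      (f none + f (some (0 : Fin 5)) + f (some (1 : Fin 5)) = 0 ∧
       f none = f (some (2 : Fin 5)) + f (some (3 : Fin 5)) ∧
       f (some (0 : Fin 5)) + f (some (2 : Fin 5)) = f (some (4 : Fin 5)) ∧
       f (some (1 : Fin 5)) + f (some (3 : Fin 5)) + f (some (4 : Fin 5)) = 0) := by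
  change (∀ v : Fin 4, (∑ e : Option (Fin 5), Set.indicator {e' : Option (Fin 5) | e'.elim (1:Fin 4) ![2,3,2,3,3] = v} f e) = ∑ e : Option (Fin 5), Set.indicator {e' : Option (Fin 5) | e'.elim (0:Fin 4) ![0,0,1,1,2] = v} f e) ↔ _
  constructor
  · intro h
    have h0 := h ((0:Fin 4) : (K4minus.addEdge (0:Fin 4) (1:Fin 4)).V)
    have h1 := h ((1:Fin 4))
    have h2 := h ((2:Fin 4))
    have h3 := h ((3:Fin 4))
    simp [Fintype.sum_option, Fin.sum_univ_five, Set.indicator, Option.elim] at h0 h1 h2 h3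
    exact ⟨by rw [add_assoc]; exact h0.symm, h1, h2, h3⟩
  · rintro ⟨h0, h1, h2, h3⟩ v
    fin_cases v <;>
      simp [Fintype.sum_option, Fin.sum_univ_five, Set.indicator, Option.elim] <;>
      [skip; exact h1; exact h2; skip]
    · rw [add_assoc] at h0; exact h0.symm
    · exact h3

end CP5Aux

/-- the open 5-capacity of `K_4` minus an edge (with the two
endpoints of the missing edge as terminals) is `ℝ/5ℤ ∖ {2, 3}`. -/
theorem cp5_K4minus :
    K4minus.CP5 ((0 : Fin 4) : K4minus.V) ((1 : Fin 4) : K4minus.V) =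
      Set.univ \ {((2 : ℝ) : AddCircle (5 : ℝ)), ((3 : ℝ) : AddCircle (5 : ℝ))} := by
  ext w
  simp only [Set.mem_diff, Set.mem_univ, true_and, Set.mem_insert_iff,
    Set.mem_singleton_iff, not_or, Multigraph.CP5, Set.mem_setOf_eq]
  constructor
  · rintro ⟨f, hf, harc, hw⟩
    replace hf := (isFlow_iff5 f).mp hf
    obtain ⟨h0, h1, h2, h3⟩ := hf
    obtain ⟨t0, ⟨ht01, ht04⟩, e0⟩ := mem_arc14.mp (harc ((0:Fin 5) : K4minus.E))
    obtain ⟨t1, ⟨ht11, ht14⟩, e1⟩ := mem_arc14.mp (harc ((1:Fin 5) : K4minus.E))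
    obtain ⟨t2, ⟨ht21, ht24⟩, e2⟩ := mem_arc14.mp (harc ((2:Fin 5) : K4minus.E))
    obtain ⟨t3, ⟨ht31, ht34⟩, e3⟩ := mem_arc14.mp (harc ((3:Fin 5) : K4minus.E))
    obtain ⟨t4, ⟨ht41, ht44⟩, e4⟩ := mem_arc14.mp (harc ((4:Fin 5) : K4minus.E))
    rw [← e0, ← e2, ← e4, ← AddCircle.coe_add] at h2
    obtain ⟨k, hk⟩ := (coe_eq_coe5 _ _).mp h2
    constructor
    · intro hw2
      rw [hw, hw2, ← e2, ← e3, ← AddCircle.coe_add] at h1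
      obtain ⟨n, hn⟩ := (coe_eq_coe5 _ _).mp h1.symm
      have hn' : n = 1 := by
        have c1 : (0:ℝ) < n := by linarith
        have c2 : (n:ℝ) < 2 := by linarith
        have d1 : (0:ℤ) < n := by exact_mod_cast c1
        have d2 : n < 2 := by exact_mod_cast c2
        omega
      rw [hn'] at hn; push_cast at hn
      rw [hw, hw2, ← e0, ← e1] at h0
      have h0' : ((t0 + t1 + 2 : ℝ) : AddCircle (5:ℝ)) = ((0:ℝ) : AddCircle (5:ℝ)) := by
        have z : ((0:ℝ) : AddCircle (5:ℝ)) = 0 := by norm_num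
        rw [AddCircle.coe_add, AddCircle.coe_add, z, ← h0]; abel
      obtain ⟨m, hm⟩ := (coe_eq_coe5 _ _).mp h0'
      have hm' : m = 1 := by
        have c1 : (0:ℝ) < m := by linarith
        have c2 : (m:ℝ) < 2 := by linarith
        have d1 : (0:ℤ) < m := by exact_mod_cast c1
        have d2 : m < 2 := by exact_mod_cast c2
        omega
      rw [hm'] at hm; push_cast at hm
      -- now t2 + t3 = 7 and t0 + t1 = 3, so t0 < 2, t2 > 3
      have c1 : (0:ℝ) < k := by linarith
      have c2 : (k:ℝ) < 1 := by linarith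
      have d1 : (0:ℤ) < k := by exact_mod_cast c1
      have d2 : k < 1 := by exact_mod_cast c2
      omega
    · intro hw3
      rw [hw, hw3, ← e2, ← e3, ← AddCircle.coe_add] at h1
      obtain ⟨n, hn⟩ := (coe_eq_coe5 _ _).mp h1.symm
      have hn' : n = 0 := by
        have c1 : (-1:ℝ) < n := by linarith
        have c2 : (n:ℝ) < 1 := by linarith
        have d1 : (-1:ℤ) < n := by exact_mod_cast c1
        have d2 : n < 1 := by exact_mod_cast c2
        omega
      rw [hn'] at hn; push_cast at hn
      rw [hw, hw3, ← e0, ← e1] at h0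
      have h0' : ((t0 + t1 + 3 : ℝ) : AddCircle (5:ℝ)) = ((0:ℝ) : AddCircle (5:ℝ)) := by
        have z : ((0:ℝ) : AddCircle (5:ℝ)) = 0 := by norm_num
        rw [AddCircle.coe_add, AddCircle.coe_add, z, ← h0]; abel
      obtain ⟨m, hm⟩ := (coe_eq_coe5 _ _).mp h0'
      have hm' : m = 2 := by
        have c1 : (1:ℝ) < m := by linarith
        have c2 : (m:ℝ) < 3 := by linarith
        have d1 : (1:ℤ) < m := by exact_mod_cast c1
        have d2 : m < 3 := by exact_mod_cast c2
        omega
      rw [hm'] at hm; push_cast at hm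
      -- now t2 + t3 = 3 and t0 + t1 = 7, so t0 > 3, t2 > 1
      have c1 : (0:ℝ) < k := by linarith
      have c2 : (k:ℝ) < 1 := by linarith
      have d1 : (0:ℤ) < k := by exact_mod_cast c1
      have d2 : k < 1 := by exact_mod_cast c2
      omega
  · rintro ⟨hw2, hw3⟩
    obtain ⟨a, ha0, ha5, hrep⟩ := exists_rep5 w
    have ha2 : a ≠ 2 := fun h => hw2 (by rw [← hrep, h])
    have ha3 : a ≠ 3 := fun h => hw3 (by rw [← hrep, h])
    -- choose flow values depending on the position of a
    obtain ⟨t0, t1, t2, t3, t4, hb, he0, he1, he2, he3⟩ :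
        ∃ t0 t1 t2 t3 t4 : ℝ,
          ((1 < t0 ∧ t0 < 4) ∧ (1 < t1 ∧ t1 < 4) ∧ (1 < t2 ∧ t2 < 4) ∧
           (1 < t3 ∧ t3 < 4) ∧ (1 < t4 ∧ t4 < 4)) ∧
          (∃ n : ℤ, a + t0 + t1 = 5 * n) ∧ (∃ n : ℤ, t2 + t3 - a = 5 * n) ∧
          (∃ n : ℤ, t0 + t2 - t4 = 5 * n) ∧ (∃ n : ℤ, t1 + t3 + t4 = 5 * n) := by
      rcases lt_or_gt_of_ne ha2 with hlt2 | hgt2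
      · -- a ∈ [0, 2)
        exact ⟨(6-a)/4, (14-3*a)/4, (3*a+6)/4, (14+a)/4, (a+6)/2,
          ⟨⟨by linarith, by linarith⟩, ⟨by linarith, by linarith⟩, ⟨by linarith, by linarith⟩,
           ⟨by linarith, by linarith⟩, ⟨by linarith, by linarith⟩⟩,
          ⟨1, by ring⟩, ⟨1, by ring⟩, ⟨0, by ring⟩, ⟨2, by ring⟩⟩
      rcases lt_or_gt_of_ne ha3 with hlt3 | hgt3
      · -- a ∈ (2, 3)
        exact ⟨(5-a)/2, (5-a)/2, a/2, a/2, 5/2,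
          ⟨⟨by linarith, by linarith⟩, ⟨by linarith, by linarith⟩, ⟨by linarith, by linarith⟩,
           ⟨by linarith, by linarith⟩, ⟨by linarith, by linarith⟩⟩,
          ⟨1, by ring⟩, ⟨0, by ring⟩, ⟨0, by ring⟩, ⟨1, by ring⟩⟩
      · -- a ∈ (3, 5)
        exact ⟨(19-a)/4, (21-3*a)/4, (3*a-1)/4, (a+1)/4, (a-1)/2,
          ⟨⟨by linarith, by linarith⟩, ⟨by linarith, by linarith⟩, ⟨by linarith, by linarith⟩,
           ⟨by linarith, by linarith⟩, ⟨by linarith, by linarith⟩⟩,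
          ⟨2, by ring⟩, ⟨0, by ring⟩, ⟨1, by ring⟩, ⟨1, by ring⟩⟩
    refine ⟨fun e => e.elim w (fun i => ((![t0, t1, t2, t3, t4] i : ℝ) : AddCircle (5:ℝ))),
      ?_, ?_, rfl⟩
    · refine (isFlow_iff5 _).mpr ?_
      refine ⟨?_, ?_, ?_, ?_⟩
      · show w + _ + _ = 0
        rw [← hrep]
        simp only [Option.elim, Matrix.cons_val_zero, Matrix.cons_val_one, Matrix.head_cons]
        rw [← AddCircle.coe_add, ← AddCircle.coe_add]
        obtain ⟨n, hn⟩ := he0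
        exact coe_eq_zero5 _ n hn
      · show w = _
        rw [← hrep]
        simp only [Option.elim]
        norm_num
        rw [← AddCircle.coe_add]
        obtain ⟨n, hn⟩ := he1
        exact (coe_eq_of5 _ _ n (by simp only [Matrix.cons_val]; linarith)).symm
      · simp only [Option.elim]
        norm_num
        rw [← AddCircle.coe_add]
        obtain ⟨n, hn⟩ := he2
        exact coe_eq_of5 _ _ n (by simp only [Matrix.cons_val]; linarith)
      · simp only [Option.elim]
        norm_num
        rw [← AddCircle.coe_add, ← AddCircle.coe_add]
        obtain ⟨n, hn⟩ := he3
        exact coe_eq_zero5 _ n hn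
    · intro e
      fin_cases e <;> simp only [Option.elim] <;> norm_num <;>
        exact mem_arc14.mpr ⟨_, ⟨by linarith [hb.1, hb.2.1, hb.2.2.1, hb.2.2.2.1, hb.2.2.2.2],
          by linarith [hb.1, hb.2.1, hb.2.2.1, hb.2.2.2.1, hb.2.2.2.2]⟩, rfl⟩
end

section
/- Let H be a finite graph and σ a capacity function on H. Let P = v_0 v_1 … v_k be a path in H with σ(e) = (4,1) for every edge e of P, such that every internal vertex of P has degree 3 in H and σ(e) ⊆ (1,4) for every edge e not on P incident to an internal vertex of P. If H contains an edge joining two internal vertices of P whose distance along P is even (so that this edge together with edges of P forms an odd cycle), then H admits no σ-faithful flow, i.e. there is no modular 5-flow f on H with f(e) ∈ σ(e) for every edge e of H. -/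
open scoped Classical

/-!
Orient the path edges along `P` and lift their flow values to reals `t_0, …, t_{k-1}` in
`(-1, 1)`. At an interior vertex `v_n` the only further edge carries `t_{n-1} - t_n`, which lies
in `(1, 4)` mod 5; hence `|t_{n-1} - t_n| > 1` and consecutive values have opposite signs. The
chord carries the difference at `v_i` out of `v_i` and the difference at `v_j` into `v_j`, so the
two differences cancel mod 5. But `i ≡ j (mod 2)`, so they have the same sign, and their sum is
a nonzero real of absolute value less than 4.
-/

open Set

theorem AddCircle.eq_zero_of_coe_eq_zero {p x : ℝ} (h : (x : AddCircle p) = 0) (hx : |x| < p) :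
    x = 0 := by
  obtain ⟨n, rfl⟩ := (AddCircle.coe_eq_zero_iff p).1 h
  rw [zsmul_eq_mul, abs_mul] at hx
  have hn : |(n : ℝ)| < 1 :=
    lt_of_mul_lt_mul_right (by linarith [le_abs_self p]) (abs_nonneg p)
  rw [← Int.cast_abs, ← Int.cast_one, Int.cast_lt, Int.abs_lt_one_iff] at hn
  simp [hn]

theorem arc_one_four : arc 1 4 = ((↑) : ℝ → AddCircle (5 : ℝ)) '' Ioo 1 4 := by
  simp [arc, show arcEnd 1 4 = 4 by decide]

theorem arc_four_one : arc 4 1 = ((↑) : ℝ → AddCircle (5 : ℝ)) '' Ioo (-1) 1 := by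
  have hshift : Ioo (4 : ℝ) 6 = (· + 5) '' Ioo (-1) 1 := by
    rw [image_add_const_Ioo]; norm_num
  simp only [arc, show arcEnd 4 1 = 6 by decide, Int.cast_ofNat, hshift, image_image,
    AddCircle.coe_add_period]

/-- The lift of `a - b` to `(-2, 2)` lies in `(1, 2)` or in `(-2, -1)`. -/
theorem opposite_signs_of_sub_mem_arc_one_four {a b : ℝ} (ha : a ∈ Ioo (-1 : ℝ) 1)
    (hb : b ∈ Ioo (-1 : ℝ) 1) (h : (a : AddCircle (5 : ℝ)) - b ∈ arc 1 4) :
    0 < a ∧ b < 0 ∨ a < 0 ∧ 0 < b := by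
  rw [arc_one_four, ← AddCircle.coe_sub] at h
  obtain ⟨c, ⟨hc1, hc4⟩, hc⟩ := h
  obtain ⟨ha1, ha2⟩ := ha
  obtain ⟨hb1, hb2⟩ := hb
  rcases le_or_gt 0 (a - b) with hab | hab
  · have : a - b - c = 0 := AddCircle.eq_zero_of_coe_eq_zero (p := 5)
      (by rw [AddCircle.coe_sub, hc, sub_self]) (abs_lt.2 ⟨by linarith, by linarith⟩)
    exact Or.inl ⟨by linarith, by linarith⟩
  · have : a - b - (c - 5) = 0 := AddCircle.eq_zero_of_coe_eq_zero (p := 5)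
      (by rw [show a - b - (c - 5) = a - b - c + 5 by ring, AddCircle.coe_add_period,
        AddCircle.coe_sub, hc, sub_self])
      (abs_lt.2 ⟨by linarith, by linarith⟩)
    exact Or.inr ⟨by linarith, by linarith⟩

theorem iff_of_alternating_of_even_iff {P : ℕ → Prop} {k : ℕ}
    (hP : ∀ n, n + 1 < k → (P (n + 1) ↔ ¬ P n)) {a b : ℕ} (ha : a < k) (hb : b < k)
    (hab : Even a ↔ Even b) : P a ↔ P b := by
  have key : ∀ n < k, P n ↔ (P 0 ↔ Even n) := by
    intro n
    induction n with
    | zero => simp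
    | succ n ih =>
      intro hn
      rw [hP n hn, ih (by omega), Nat.even_add_one]
      tauto
  rw [key a ha, key b hb, hab]

/-- The signs of `t` alternate, so the two differences have the same sign and their sum lies in
`(0, 4)` or in `(-4, 0)`. -/
theorem sub_add_sub_ne_zero_of_steps_mem_arc {k : ℕ} {t : ℕ → ℝ}
    (ht : ∀ n < k, t n ∈ Ioo (-1 : ℝ) 1)
    (hstep : ∀ n, 0 < n → n < k → (t (n - 1) : AddCircle (5 : ℝ)) - t n ∈ arc 1 4)
    {i j : ℕ} (hi : 0 < i) (hik : i < k) (hj : 0 < j) (hjk : j < k)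
    (hij : Even (Nat.dist i j)) :
    (t (i - 1) : AddCircle (5 : ℝ)) - t i + ((t (j - 1) : AddCircle (5 : ℝ)) - t j) ≠ 0 := by
  have hsign : ∀ n, 0 < n → n < k → 0 < t (n - 1) ∧ t n < 0 ∨ t (n - 1) < 0 ∧ 0 < t n :=
    fun n h0 hk => opposite_signs_of_sub_mem_arc_one_four (ht _ (by omega)) (ht n hk)
      (hstep n h0 hk)
  have hsame : 0 < t (i - 1) ↔ 0 < t (j - 1) := by
    refine iff_of_alternating_of_even_iff (P := fun n => 0 < t n) (fun n hn => ?_)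
      (by omega : i - 1 < k) (by omega : j - 1 < k) ?_
    · rcases hsign (n + 1) (by omega) hn with ⟨h1, h2⟩ | ⟨h1, h2⟩ <;>
        simp only [Nat.add_sub_cancel] at h1 h2 <;> constructor <;> intro <;> linarith
    · simp only [Nat.even_iff, Nat.dist] at hij ⊢
      omega
  intro h
  rw [← AddCircle.coe_sub, ← AddCircle.coe_sub, ← AddCircle.coe_add] at h
  obtain ⟨_, _⟩ := ht (i - 1) (by omega)
  obtain ⟨_, _⟩ := ht i hik
  obtain ⟨_, _⟩ := ht (j - 1) (by omega)
  obtain ⟨_, _⟩ := ht j hjk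
  have := AddCircle.eq_zero_of_coe_eq_zero (p := 5) h (abs_lt.2 ⟨by linarith, by linarith⟩)
  rcases hsign i hi hik with ⟨ha, hb⟩ | ⟨ha, hb⟩ <;>
    rcases hsign j hj hjk with ⟨hc, hd⟩ | ⟨hc, hd⟩
  · linarith
  · linarith [hsame.1 ha]
  · linarith [hsame.2 hc]
  · linarith

namespace Multigraph

variable {G : Multigraph} {M : Type*} [AddCommGroup M]

noncomputable def netOut (G : Multigraph) (f : G.E → M) (v : G.V) (e : G.E) : M :=
  (if G.src e = v then f e else 0) - (if G.tgt e = v then f e else 0)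

noncomputable def incidence (G : Multigraph) (v : G.V) (e : G.E) : ℕ :=
  (if G.src e = v then 1 else 0) + (if G.tgt e = v then 1 else 0)

theorem incidence_ne_zero_iff {v : G.V} {e : G.E} :
    G.incidence v e ≠ 0 ↔ G.src e = v ∨ G.tgt e = v := by
  unfold incidence
  split_ifs <;> simp_all

theorem netOut_eq_zero_of_incidence_eq_zero {f : G.E → M} {v : G.V} {e : G.E}
    (h : G.incidence v e = 0) : G.netOut f v e = 0 := by
  unfold incidence at h
  unfold netOut
  split_ifs at h ⊢ <;> simp_all

theorem netOut_mem {S : Set M} (hS : ∀ z, z ∈ S ↔ -z ∈ S) {f : G.E → M} {v : G.V}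
    {e : G.E} (h : G.incidence v e = 1) (hf : f e ∈ S) : G.netOut f v e ∈ S := by
  unfold incidence at h
  unfold netOut
  split_ifs at h ⊢ <;> first | omega | simpa using hf | simpa using (hS _).1 hf

theorem degree_eq_sum_incidence (v : G.V) : G.degree v = ∑ e, G.incidence v e := by
  simp only [degree, incidence, Finset.sum_add_distrib, Nat.card_eq_fintype_card,
    Fintype.card_subtype, Finset.sum_boole, Nat.cast_id]

theorem IsFlow.sum_netOut {f : G.E → M} (hf : G.IsFlow f) (v : G.V) :
    ∑ e, G.netOut f v e = 0 := by
  have h := hf v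
  simp only [indicator_apply, mem_ofPred_eq] at h
  simp only [netOut, Finset.sum_sub_distrib, h, sub_self]

theorem IsFlow.netOut_add_add_eq_zero {f : G.E → M} (hf : G.IsFlow f) {v : G.V}
    {a b c : G.E} (hab : a ≠ b) (hac : a ≠ c) (hbc : b ≠ c)
    (hrest : ∀ e, e ≠ a → e ≠ b → e ≠ c → G.incidence v e = 0) :
    G.netOut f v a + G.netOut f v b + G.netOut f v c = 0 := by
  rw [← hf.sum_netOut v, ← Finset.sum_subset (Finset.subset_univ {a, b, c})]
  · rw [Finset.sum_insert (by simp [hab, hac]), Finset.sum_pair hbc, add_assoc]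
  · intro e _ he
    simp only [Finset.mem_insert, Finset.mem_singleton, not_or] at he
    exact netOut_eq_zero_of_incidence_eq_zero (hrest e he.1 he.2.1 he.2.2)

theorem exists_third_edge {v : G.V} (hdeg : G.degree v = 3) {a b : G.E} (hab : a ≠ b)
    (ha : G.incidence v a = 1) (hb : G.incidence v b = 1) :
    ∃ c, c ≠ a ∧ c ≠ b ∧ G.incidence v c = 1 ∧
      ∀ e, e ≠ a → e ≠ b → e ≠ c → G.incidence v e = 0 := by
  have hs : ∑ e ∈ (Finset.univ.erase a).erase b, G.incidence v e = 1 := by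
    have h := G.degree_eq_sum_incidence v
    rw [← Finset.add_sum_erase _ _ (Finset.mem_univ a),
      ← Finset.add_sum_erase _ _ (Finset.mem_erase.2 ⟨hab.symm, Finset.mem_univ b⟩)] at h
    omega
  set s := (Finset.univ.erase a).erase b
  obtain ⟨c, hcs, hc⟩ : ∃ c ∈ s, G.incidence v c ≠ 0 := by
    by_contra! h
    rw [Finset.sum_eq_zero h] at hs
    exact zero_ne_one hs
  have hsplit := Finset.add_sum_erase s (G.incidence v) hcs
  have hrest : ∑ e ∈ s.erase c, G.incidence v e = 0 := by omega
  simp only [s, Finset.mem_erase] at hcs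
  refine ⟨c, hcs.2.1, hcs.1, by omega, fun e hea heb hec => ?_⟩
  exact Finset.sum_eq_zero_iff.1 hrest e (by simp [s, hea, heb, hec])

theorem Joins.symm {e : G.E} {v w : G.V} (h : G.Joins e v w) : G.Joins e w v :=
  Or.symm h

theorem Joins.incidence_ne_zero {e : G.E} {v w : G.V} (h : G.Joins e v w) :
    G.incidence v e ≠ 0 := by
  rw [incidence_ne_zero_iff]
  rcases h with ⟨h, -⟩ | ⟨-, h⟩
  exacts [Or.inl h, Or.inr h]

theorem Joins.incidence_eq_one {e : G.E} {v w : G.V} (h : G.Joins e v w) (hvw : v ≠ w) :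
    G.incidence v e = 1 := by
  rcases h with ⟨rfl, rfl⟩ | ⟨rfl, rfl⟩ <;> simp [incidence, hvw.symm]

theorem Joins.eq_or_eq_of_incidence_ne_zero {e : G.E} {v w x : G.V} (h : G.Joins e v w)
    (hx : G.incidence x e ≠ 0) : x = v ∨ x = w := by
  rw [incidence_ne_zero_iff] at hx
  rcases h with ⟨rfl, rfl⟩ | ⟨rfl, rfl⟩ <;> tauto

theorem Joins.netOut_right {e : G.E} {v w : G.V} (h : G.Joins e v w) (hvw : v ≠ w)
    (f : G.E → M) : G.netOut f w e = -G.netOut f v e := by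
  rcases h with ⟨rfl, rfl⟩ | ⟨rfl, rfl⟩ <;> simp [netOut, hvw, hvw.symm]

section Path

variable {H : Multigraph} {k : ℕ} {p : Fin (k + 1) → H.V} {pe : Fin k → H.E}

theorem val_eq_or_eq_add_one_of_incidence_ne_zero (hp : Function.Injective p)
    (hpe : ∀ i : Fin k, H.Joins (pe i) (p i.castSucc) (p i.succ)) {m : Fin k}
    {w : Fin (k + 1)} (h : H.incidence (p w) (pe m) ≠ 0) :
    w.val = m.val ∨ w.val = m.val + 1 := by
  rcases (hpe m).eq_or_eq_of_incidence_ne_zero h with h | h <;> simp [hp h]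

theorem pathEdge_injective (hp : Function.Injective p)
    (hpe : ∀ i : Fin k, H.Joins (pe i) (p i.castSucc) (p i.succ)) : Function.Injective pe := by
  intro m m' h
  have h1 := val_eq_or_eq_add_one_of_incidence_ne_zero hp hpe
    (h ▸ (hpe m).incidence_ne_zero)
  have h2 := val_eq_or_eq_add_one_of_incidence_ne_zero hp hpe
    (h ▸ (hpe m).symm.incidence_ne_zero)
  simp only [Fin.val_castSucc, Fin.val_succ] at h1 h2
  omega

theorem pathEdge_incidence_castSucc (hp : Function.Injective p)
    (hpe : ∀ i : Fin k, H.Joins (pe i) (p i.castSucc) (p i.succ)) (m : Fin k) :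
    H.incidence (p m.castSucc) (pe m) = 1 :=
  (hpe m).incidence_eq_one (hp.ne Fin.castSucc_lt_succ.ne)

theorem exists_real_lift_along_path {σ : H.E → Set (AddCircle (5 : ℝ))}
    (hσsym : ∀ (e : H.E) (z : AddCircle (5 : ℝ)), z ∈ σ e ↔ -z ∈ σ e)
    (hp : Function.Injective p) (hpe : ∀ i : Fin k, H.Joins (pe i) (p i.castSucc) (p i.succ))
    (hσP : ∀ i : Fin k, σ (pe i) = arc 4 1) {f : H.E → AddCircle (5 : ℝ)}
    (hfσ : ∀ e, f e ∈ σ e) :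
    ∃ t : ℕ → ℝ, (∀ n < k, t n ∈ Ioo (-1 : ℝ) 1) ∧
      ∀ m : Fin k, (t m : AddCircle (5 : ℝ)) = H.netOut f (p m.castSucc) (pe m) := by
  have hlift : ∀ m : Fin k, ∃ r ∈ Ioo (-1 : ℝ) 1,
      (r : AddCircle (5 : ℝ)) = H.netOut f (p m.castSucc) (pe m) := by
    intro m
    rw [← mem_image, ← arc_four_one, ← hσP m]
    exact netOut_mem (hσsym _) (pathEdge_incidence_castSucc hp hpe m) (hfσ _)
  choose r hr using hlift
  refine ⟨fun n => if h : n < k then r ⟨n, h⟩ else 0, fun n hn => ?_, fun m => ?_⟩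
  · simpa [hn] using (hr ⟨n, hn⟩).1
  · simpa [m.isLt] using (hr m).2

theorem IsFlow.interior_balance {f : H.E → M} (hf : H.IsFlow f) (hp : Function.Injective p)
    (hpe : ∀ i : Fin k, H.Joins (pe i) (p i.castSucc) (p i.succ)) {u : ℕ → M}
    (hu : ∀ m : Fin k, u m = H.netOut f (p m.castSucc) (pe m)) {v : Fin (k + 1)}
    (hv0 : 0 < v.val) (hvk : v.val < k) (hdeg : H.degree (p v) = 3) :
    ∃ c ∉ range pe, H.incidence (p v) c = 1 ∧
      (∀ e ∉ range pe, H.incidence (p v) e ≠ 0 → e = c) ∧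
      u (v - 1) - u v = H.netOut f (p v) c := by
  set m : Fin k := ⟨v - 1, by omega⟩
  set m' : Fin k := ⟨v, hvk⟩
  have hin : H.Joins (pe m) (p m.castSucc) (p v) := by
    rw [show v = m.succ from Fin.ext (by simp [m]; omega)]; exact hpe m
  have hout : H.Joins (pe m') (p v) (p m'.succ) := hpe m'
  have hin_ne : p m.castSucc ≠ p v := hp.ne (Fin.ne_of_val_ne (by simp [m]; omega))
  have hout_ne : p v ≠ p m'.succ := hp.ne (Fin.ne_of_val_ne (by simp [m']))
  have hmm' : pe m ≠ pe m' :=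
    (pathEdge_injective hp hpe).ne (Fin.ne_of_val_ne (by simp [m, m']; omega))
  obtain ⟨c, hcm, hcm', hc, hrest⟩ := exists_third_edge hdeg hmm'
    (hin.symm.incidence_eq_one hin_ne.symm) (hout.incidence_eq_one hout_ne)
  have hc_off : c ∉ range pe := by
    rintro ⟨l, rfl⟩
    rcases val_eq_or_eq_add_one_of_incidence_ne_zero hp hpe (hc ▸ one_ne_zero) with h | h
    · exact hcm' (congrArg pe (Fin.ext (by simp [m']; omega)))
    · exact hcm (congrArg pe (Fin.ext (by simp [m]; omega)))
  refine ⟨c, hc_off, hc, fun e he hev => ?_, ?_⟩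
  · by_contra hec
    exact hev (hrest e (fun h => he ⟨m, h.symm⟩) (fun h => he ⟨m', h.symm⟩) hec)
  · have h0 := hf.netOut_add_add_eq_zero hmm' hcm.symm hcm'.symm hrest
    rw [hin.netOut_right hin_ne] at h0
    rw [show u (v - 1) = u m from rfl, hu m, show u v = u m' from rfl, hu m',
      show m'.castSucc = v from rfl]
    linear_combination (norm := abel) -h0

end Path

end Multigraph

open Multigraph

/-- let `P = v_0 … v_k` be a path of `(4,1)`-edges in `H` whose
internal vertices all have degree 3 in `H`, such that every edge not on `P`
incident with an internal vertex has capacity contained in `(1,4)`.  If some edge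
of `H` joins two internal vertices of `P` at even distance along `P`, then `H`
has no `σ`-faithful flow. -/
theorem path_even_chord_no_faithful (H : Multigraph)
    (σ : H.E → Set (AddCircle (5 : ℝ)))
    (hσsym : ∀ (e : H.E) (z : AddCircle (5 : ℝ)), z ∈ σ e ↔ -z ∈ σ e)
    (k : ℕ) (p : Fin (k + 1) → H.V) (pe : Fin k → H.E)
    (hp : Function.Injective p)
    (hpe : ∀ i : Fin k, H.Joins (pe i) (p i.castSucc) (p i.succ))
    (hσP : ∀ i : Fin k, σ (pe i) = arc 4 1)
    (hdeg : ∀ i : Fin (k + 1), 0 < i.val → i.val < k → H.degree (p i) = 3)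
    (hoff : ∀ i : Fin (k + 1), 0 < i.val → i.val < k → ∀ e : H.E,
      e ∉ Set.range pe → (H.src e = p i ∨ H.tgt e = p i) → σ e ⊆ arc 1 4)
    (i j : Fin (k + 1)) (hi : 0 < i.val) (hik : i.val < k)
    (hj : 0 < j.val) (hjk : j.val < k) (hij : i ≠ j)
    (heven : Even (Nat.dist i.val j.val))
    (e₀ : H.E) (he₀ : H.Joins e₀ (p i) (p j)) :
    ¬ H.HasFaithful σ := by
  rintro ⟨f, hf, hfσ⟩
  obtain ⟨t, ht_mem, ht⟩ := exists_real_lift_along_path hσsym hp hpe hσP hfσ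
  have hbal : ∀ v : Fin (k + 1), 0 < v.val → v.val < k → ∃ c ∉ Set.range pe,
      (∀ e ∉ Set.range pe, H.incidence (p v) e ≠ 0 → e = c) ∧
      (t (v - 1) : AddCircle (5 : ℝ)) - t v = H.netOut f (p v) c ∧
      H.netOut f (p v) c ∈ arc 1 4 := by
    intro v hv0 hvk
    obtain ⟨c, hc, hc1, huniq, hbal⟩ := hf.interior_balance hp hpe
      (u := fun n => (t n : AddCircle (5 : ℝ))) ht hv0 hvk (hdeg v hv0 hvk)
    refine ⟨c, hc, huniq, hbal, hoff v hv0 hvk c hc ?_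
      (netOut_mem (hσsym c) hc1 (hfσ c))⟩
    exact incidence_ne_zero_iff.1 (by omega)
  have he₀_off : e₀ ∉ Set.range pe := by
    rintro ⟨l, rfl⟩
    have h1 := val_eq_or_eq_add_one_of_incidence_ne_zero hp hpe he₀.incidence_ne_zero
    have h2 := val_eq_or_eq_add_one_of_incidence_ne_zero hp hpe he₀.symm.incidence_ne_zero
    have := Fin.val_ne_of_ne hij
    simp only [Nat.even_iff, Nat.dist] at heven
    omega
  obtain ⟨ci, -, hi_uniq, hi_step, -⟩ := hbal i hi hik
  obtain ⟨cj, -, hj_uniq, hj_step, -⟩ := hbal j hj hjk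
  rw [← hi_uniq e₀ he₀_off he₀.incidence_ne_zero] at hi_step
  rw [← hj_uniq e₀ he₀_off he₀.symm.incidence_ne_zero] at hj_step
  refine sub_add_sub_ne_zero_of_steps_mem_arc ht_mem (fun n hn0 hnk => ?_) hi hik hj hjk heven ?_
  · obtain ⟨c, -, -, hc, hmem⟩ := hbal ⟨n, by omega⟩ hn0 hnk
    exact hc ▸ hmem
  · rw [hi_step, hj_step, he₀.netOut_right (hp.ne hij), add_neg_cancel]
end

section
/- Let n ≥ 4 be even and let J be a nonempty even subgraph of the wheel W_n. Then W_n admits a σ_{J,(4,1)}-faithful flow, i.e. a modular 5-flow f on W_n with f(e) in the open arc (4,1) for every edge e ∈ J and f(e) in the open arc (1,4) for every edge e ∉ J. (Consequently, every graph in the family (W_n, J_{(4,1)}) has circular flow number strictly less than 5.) -/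
open scoped Classical

section WheelAux

lemma arc_one_four_s11 : arc 1 4 = (fun t : ℝ => (t : AddCircle (5:ℝ))) '' Set.Ioo (1:ℝ) 4 := by
  have h : arcEnd 1 4 = 4 := by decide
  rw [arc, h]; norm_num

lemma arc_four_one_s11 : arc 4 1 = (fun t : ℝ => (t : AddCircle (5:ℝ))) '' Set.Ioo (4:ℝ) 6 := by
  have h : arcEnd 4 1 = 6 := by decide
  rw [arc, h]; norm_num

lemma shift5 (x : ℝ) : ((x + 5 : ℝ) : AddCircle (5:ℝ)) = (x : AddCircle (5:ℝ)) := by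
  have h5 : ((5:ℝ) : AddCircle (5:ℝ)) = 0 := AddCircle.coe_period (p := (5:ℝ))
  have h : ((x + 5 : ℝ) : AddCircle (5:ℝ))
      = (x : AddCircle (5:ℝ)) + ((5:ℝ) : AddCircle (5:ℝ)) := rfl
  rw [h, h5, add_zero]

lemma mem_image_Ioo (a b d t : ℝ) (h1 : a < t) (h2 : t < b) (h3 : t = d ∨ t = d + 5) :
    ((d:ℝ) : AddCircle (5:ℝ)) ∈ (fun t : ℝ => (t : AddCircle (5:ℝ))) '' Set.Ioo a b := by
  refine ⟨t, ⟨h1, h2⟩, ?_⟩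
  rcases h3 with rfl | rfl
  · rfl
  · exact shift5 d

/-- The rim values for the faithful flow on the wheel. -/
noncomputable def Rv (n : ℕ) (J : Set (wheel n).E) (i : Fin n) : ℝ :=
  if Sum.inl i ∈ J then (if i.val % 2 = 0 then 0.9 else 4.1)
  else (if i.val % 2 = 0 then 3.5 else 1.5)

end WheelAux

/-- for even `n ≥ 4` and any nonempty even subgraph `J` of the
wheel `W_n`, the wheel admits a `σ_{J,(4,1)}`-faithful flow. -/
theorem even_wheel_hasFaithful (n : ℕ) (hn : 4 ≤ n) (hne : Even n)
    (J : Set (wheel n).E) (hJ : (wheel n).IsEvenSubgraph J) (hJne : J.Nonempty) :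
    (wheel n).HasFaithfulOn J (arc 4 1) := by
  classical
  haveI : NeZero n := ⟨by omega⟩
  have h1 : (1 : Fin n).val = 1 := by
    rw [Fin.val_one']; exact Nat.mod_eq_of_lt (by omega)
  have hrot : ∀ i : Fin n, rot n i = i + 1 := by
    intro i; ext; simp [rot, Fin.add_def, h1]
  have hpar : ∀ j : Fin n, (j - 1).val % 2 ≠ j.val % 2 := by
    intro j
    obtain ⟨m, hm⟩ := hne
    have hs : (j - 1).val = (n - 1 + j.val) % n := by rw [Fin.sub_def, h1]
    have hjn : j.val < n := j.isLt
    rcases Nat.eq_zero_or_pos j.val with h0 | h0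
    · have he : (n - 1 + j.val) % n = n - 1 := by
        rw [h0, Nat.add_zero]; exact Nat.mod_eq_of_lt (by omega)
      rw [hs, he, h0]; omega
    · have he : (n - 1 + j.val) % n = j.val - 1 := by
        have h2 : n - 1 + j.val = n + (j.val - 1) := by omega
        rw [h2, Nat.add_mod_left]; exact Nat.mod_eq_of_lt (by omega)
      rw [hs, he]; omega
  have htgt_inl : ∀ i j : Fin n, ((wheel n).tgt (Sum.inl i) = some j) ↔ i = j - 1 := by
    intro i j
    show some (rot n i) = some j ↔ _
    rw [hrot]
    constructor
    · intro h; exact eq_sub_of_add_eq (Option.some_injective _ h)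
    · intro h; subst h; rw [sub_add_cancel]
  -- cardinality computations for the even-subgraph condition
  have cardA : ∀ j : Fin n,
      Nat.card {e : (wheel n).E // e ∈ J ∧ (wheel n).src e = some j}
        = (if Sum.inl j ∈ J then 1 else 0) := by
    intro j
    have hset : {e : (wheel n).E | e ∈ J ∧ (wheel n).src e = some j}
        = J ∩ {Sum.inl j} := by
      ext e
      cases e with
      | inl i =>
        constructor
        · rintro ⟨h1, h2⟩
          exact Set.mem_inter h1 (Set.mem_singleton_iff.mpr (congrArg Sum.inl (Option.some_injective _ h2)))
        · rintro ⟨h1, h2⟩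
          exact Set.mem_setOf.mpr ⟨h1, congrArg some (Sum.inl_injective (Set.mem_singleton_iff.mp h2))⟩
      | inr i =>
        constructor
        · rintro ⟨_, h2⟩
          exact (Option.some_ne_none j h2.symm).elim
        · rintro ⟨_, h2⟩
          exact (Sum.inr_ne_inl (Set.mem_singleton_iff.mp h2)).elim
    rw [show Nat.card {e : (wheel n).E // e ∈ J ∧ (wheel n).src e = some j}
        = ({e : (wheel n).E | e ∈ J ∧ (wheel n).src e = some j}).ncard from
        Nat.card_coe_set_eq _, hset]
    by_cases h : Sum.inl j ∈ J
    · rw [if_pos h]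
      exact (congrArg Set.ncard (Set.inter_eq_right.mpr (Set.singleton_subset_iff.mpr h))).trans (Set.ncard_singleton _)
    · rw [if_neg h]
      exact (congrArg Set.ncard (Set.inter_singleton_eq_empty.mpr h)).trans (Set.ncard_empty _)
  have cardB : ∀ j : Fin n,
      Nat.card {e : (wheel n).E // e ∈ J ∧ (wheel n).tgt e = some j}
        = (if Sum.inl (j - 1) ∈ J then 1 else 0) + (if Sum.inr j ∈ J then 1 else 0) := by
    intro j
    have hset : {e : (wheel n).E | e ∈ J ∧ (wheel n).tgt e = some j}
        = J ∩ {Sum.inl (j - 1), Sum.inr j} := by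
      ext e
      cases e with
      | inl i =>
        constructor
        · rintro ⟨heJ, h⟩
          exact Set.mem_inter heJ (Or.inl (congrArg Sum.inl ((htgt_inl i j).mp h)))
        · rintro ⟨heJ, h | h⟩
          · exact Set.mem_setOf.mpr ⟨heJ, (htgt_inl i j).mpr (Sum.inl_injective h)⟩
          · exact absurd h Sum.inl_ne_inr
      | inr i =>
        have h' : ((wheel n).tgt (Sum.inr i) = some j) ↔ i = j := by
          show some i = some j ↔ _; simp
        constructor
        · rintro ⟨heJ, h⟩
          exact Set.mem_inter heJ (Or.inr (congrArg Sum.inr (h'.mp h)))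
        · rintro ⟨heJ, h | h⟩
          · exact absurd h Sum.inr_ne_inl
          · exact Set.mem_setOf.mpr ⟨heJ, h'.mpr (Sum.inr_injective h)⟩
    rw [show Nat.card {e : (wheel n).E // e ∈ J ∧ (wheel n).tgt e = some j}
        = ({e : (wheel n).E | e ∈ J ∧ (wheel n).tgt e = some j}).ncard from
        Nat.card_coe_set_eq _, hset]
    have hne' : (Sum.inl (j - 1) : (wheel n).E) ≠ Sum.inr j := by simp
    by_cases ha : Sum.inl (j - 1) ∈ J <;> by_cases hb : Sum.inr j ∈ J
    · rw [if_pos ha, if_pos hb]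
      rw [Set.inter_eq_right.mpr (by rintro e (rfl | rfl); exacts [ha, hb])]
      exact Set.ncard_pair hne'
    · rw [if_pos ha, if_neg hb]
      have hq : J ∩ {Sum.inl (j - 1), Sum.inr j} = {Sum.inl (j - 1)} := by
        ext e
        simp only [Set.mem_inter_iff, Set.mem_insert_iff, Set.mem_singleton_iff]
        constructor
        · rintro ⟨heJ, rfl | rfl⟩
          · rfl
          · exact absurd heJ hb
        · rintro rfl; exact ⟨ha, Or.inl rfl⟩
      rw [hq]; exact Set.ncard_singleton _
    · rw [if_neg ha, if_pos hb]
      have hq : J ∩ {Sum.inl (j - 1), Sum.inr j} = {Sum.inr j} := by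
        ext e
        simp only [Set.mem_inter_iff, Set.mem_insert_iff, Set.mem_singleton_iff]
        constructor
        · rintro ⟨heJ, rfl | rfl⟩
          · exact absurd heJ ha
          · rfl
        · rintro rfl; exact ⟨hb, Or.inr rfl⟩
      rw [hq]; exact Set.ncard_singleton _
    · rw [if_neg ha, if_neg hb]
      have hq : J ∩ {Sum.inl (j - 1), Sum.inr j} = ∅ := by
        ext e
        simp only [Set.mem_inter_iff, Set.mem_insert_iff, Set.mem_singleton_iff,
          Set.mem_empty_iff_false, iff_false, not_and]
        rintro heJ (rfl | rfl)
        · exact ha heJ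
        · exact hb heJ
      rw [hq, Set.ncard_empty]
  have key : ∀ j : Fin n, (Sum.inr j ∈ J ↔ ¬ (Sum.inl (j - 1) ∈ J ↔ Sum.inl j ∈ J)) := by
    intro j
    have h := hJ (some j)
    rw [cardA j, cardB j] at h
    by_cases ha : Sum.inl (j-1) ∈ J <;> by_cases hb : Sum.inl j ∈ J <;>
      by_cases hc : Sum.inr j ∈ J <;>
      simp_all [Nat.even_iff]
  -- the flow
  set R : Fin n → ℝ := Rv n J with hRdef
  set f : (wheel n).E → AddCircle (5:ℝ) :=
    fun e => match e with
      | Sum.inl i => ((R i : ℝ) : AddCircle (5:ℝ))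
      | Sum.inr i => ((R i - R (i - 1) : ℝ) : AddCircle (5:ℝ)) with hfdef
  have hsum : ∀ g : (wheel n).E → AddCircle (5:ℝ),
      ∑ e : (wheel n).E, g e = ∑ i : Fin n, g (Sum.inl i) + ∑ i : Fin n, g (Sum.inr i) :=
    fun g => Fintype.sum_sum_type g
  have hcoe_sub : ∀ x y : ℝ, ((x - y : ℝ) : AddCircle (5:ℝ))
      = (x : AddCircle (5:ℝ)) - (y : AddCircle (5:ℝ)) := fun _ _ => rfl
  refine ⟨f, ?_, ?_, ?_⟩
  · -- IsFlow
    intro v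
    rw [hsum, hsum]
    rcases v with _ | j
    · have ht1 : ∀ i : Fin n,
          Set.indicator {e' : (wheel n).E | (wheel n).tgt e' = none} f (Sum.inl i) = 0 := by
        intro i; apply Set.indicator_of_notMem; exact fun h => Option.some_ne_none _ h
      have ht2 : ∀ i : Fin n,
          Set.indicator {e' : (wheel n).E | (wheel n).tgt e' = none} f (Sum.inr i) = 0 := by
        intro i; apply Set.indicator_of_notMem; exact fun h => Option.some_ne_none _ h
      have hs1 : ∀ i : Fin n,
          Set.indicator {e' : (wheel n).E | (wheel n).src e' = none} f (Sum.inl i) = 0 := by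
        intro i; apply Set.indicator_of_notMem; exact fun h => Option.some_ne_none _ h
      have hs2 : ∀ i : Fin n,
          Set.indicator {e' : (wheel n).E | (wheel n).src e' = none} f (Sum.inr i)
            = f (Sum.inr i) := by
        intro i
        apply Set.indicator_of_mem
        show (wheel n).src (Sum.inr i) = none
        rfl
      rw [Finset.sum_congr rfl (fun i _ => ht1 i), Finset.sum_congr rfl (fun i _ => ht2 i),
        Finset.sum_congr rfl (fun i _ => hs1 i), Finset.sum_congr rfl (fun i _ => hs2 i)]
      simp only [Finset.sum_const_zero, add_zero, zero_add]
      have hsub : ∑ i : Fin n, f (Sum.inr i)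
          = ∑ i : Fin n, (((R i : ℝ) : AddCircle (5:ℝ)) - ((R (i-1) : ℝ) : AddCircle (5:ℝ))) := by
        apply Finset.sum_congr rfl
        intro i _
        show ((R i - R (i - 1) : ℝ) : AddCircle (5:ℝ)) = _
        exact hcoe_sub _ _
      rw [hsub, Finset.sum_sub_distrib]
      have heq : ∑ i : Fin n, ((R (i-1) : ℝ) : AddCircle (5:ℝ))
          = ∑ i : Fin n, ((R i : ℝ) : AddCircle (5:ℝ)) :=
        Fintype.sum_equiv (Equiv.subRight (1 : Fin n)) _ _ (fun x => rfl)
      rw [heq, sub_self]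
    · have ht1 : ∀ i : Fin n,
          Set.indicator {e' : (wheel n).E | (wheel n).tgt e' = some j} f (Sum.inl i)
            = if i = j - 1 then f (Sum.inl i) else 0 := by
        intro i
        refine (Set.indicator_apply _ _ _).trans ?_
        congr 1
        simp only [Set.mem_setOf_eq, eq_iff_iff]
        exact htgt_inl i j
      have ht2 : ∀ i : Fin n,
          Set.indicator {e' : (wheel n).E | (wheel n).tgt e' = some j} f (Sum.inr i)
            = if i = j then f (Sum.inr i) else 0 := by
        intro i
        refine (Set.indicator_apply _ _ _).trans ?_
        congr 1
        simp only [Set.mem_setOf_eq, eq_iff_iff]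
        show some i = some j ↔ _
        simp
      have hs1 : ∀ i : Fin n,
          Set.indicator {e' : (wheel n).E | (wheel n).src e' = some j} f (Sum.inl i)
            = if i = j then f (Sum.inl i) else 0 := by
        intro i
        refine (Set.indicator_apply _ _ _).trans ?_
        congr 1
        simp only [Set.mem_setOf_eq, eq_iff_iff]
        show some i = some j ↔ _
        simp
      have hs2 : ∀ i : Fin n,
          Set.indicator {e' : (wheel n).E | (wheel n).src e' = some j} f (Sum.inr i) = 0 := by
        intro i; apply Set.indicator_of_notMem; exact fun h => Option.some_ne_none j (Eq.symm h)
      rw [Finset.sum_congr rfl (fun i _ => ht1 i), Finset.sum_congr rfl (fun i _ => ht2 i),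
        Finset.sum_congr rfl (fun i _ => hs1 i), Finset.sum_congr rfl (fun i _ => hs2 i)]
      rw [Finset.sum_ite_eq' Finset.univ (j - 1) (fun i => f (Sum.inl i)),
        Finset.sum_ite_eq' Finset.univ j (fun i => f (Sum.inr i)),
        Finset.sum_ite_eq' Finset.univ j (fun i => f (Sum.inl i))]
      simp only [Finset.mem_univ, if_true, Finset.sum_const_zero, add_zero]
      show ((R (j-1) : ℝ) : AddCircle (5:ℝ)) + ((R j - R (j - 1) : ℝ) : AddCircle (5:ℝ))
          = ((R j : ℝ) : AddCircle (5:ℝ))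
      rw [hcoe_sub]; abel
  · -- edges in J
    intro e he
    rw [arc_four_one_s11]
    cases e with
    | inl i =>
      show ((R i : ℝ) : AddCircle (5:ℝ)) ∈ _
      by_cases hp : i.val % 2 = 0
      · have hv : R i = 0.9 := by simp [hRdef, Rv, hp]; exact fun h => absurd he h
        rw [hv]
        exact mem_image_Ioo 4 6 0.9 5.9 (by norm_num) (by norm_num) (by norm_num)
      · have hv : R i = 4.1 := by simp [hRdef, Rv, hp]; exact fun h => absurd he h
        rw [hv]
        exact mem_image_Ioo 4 6 4.1 4.1 (by norm_num) (by norm_num) (by norm_num)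
    | inr i =>
      show ((R i - R (i - 1) : ℝ) : AddCircle (5:ℝ)) ∈ _
      have hx := (key i).mp he
      by_cases ha : Sum.inl (i - 1) ∈ J <;> by_cases hb : Sum.inl i ∈ J <;>
        by_cases hp : i.val % 2 = 0
      · exact absurd (iff_of_true ha hb) hx
      · exact absurd (iff_of_true ha hb) hx
      · -- ha, ¬hb, i even, i-1 odd : 3.5 - 4.1 = -0.6
        have hp' : ¬ ((i - 1).val % 2 = 0) := by have := hpar i; omega
        have hv : R i - R (i - 1) = -0.6 := by
          simp [hRdef, Rv, ha, hb, hp, hp']; norm_num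
        rw [hv]
        exact mem_image_Ioo 4 6 (-0.6) 4.4 (by norm_num) (by norm_num) (by norm_num)
      · -- ha, ¬hb, i odd, i-1 even : 1.5 - 0.9 = 0.6
        have hp' : (i - 1).val % 2 = 0 := by have := hpar i; omega
        have hv : R i - R (i - 1) = 0.6 := by
          simp [hRdef, Rv, ha, hb, hp, hp']; norm_num
        rw [hv]
        exact mem_image_Ioo 4 6 0.6 5.6 (by norm_num) (by norm_num) (by norm_num)
      · -- ¬ha, hb, i even : 0.9 - 1.5 = -0.6
        have hp' : ¬ ((i - 1).val % 2 = 0) := by have := hpar i; omega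
        have hv : R i - R (i - 1) = -0.6 := by
          simp [hRdef, Rv, ha, hb, hp, hp']; norm_num
        rw [hv]
        exact mem_image_Ioo 4 6 (-0.6) 4.4 (by norm_num) (by norm_num) (by norm_num)
      · -- ¬ha, hb, i odd : 4.1 - 3.5 = 0.6
        have hp' : (i - 1).val % 2 = 0 := by have := hpar i; omega
        have hv : R i - R (i - 1) = 0.6 := by
          simp [hRdef, Rv, ha, hb, hp, hp']; norm_num
        rw [hv]
        exact mem_image_Ioo 4 6 0.6 5.6 (by norm_num) (by norm_num) (by norm_num)
      · exact absurd (iff_of_false ha hb) hx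
      · exact absurd (iff_of_false ha hb) hx
  · -- edges not in J
    intro e he
    rw [arc_one_four_s11]
    cases e with
    | inl i =>
      show ((R i : ℝ) : AddCircle (5:ℝ)) ∈ _
      by_cases hp : i.val % 2 = 0
      · have hv : R i = 3.5 := by simp [hRdef, Rv, hp]; exact fun h => absurd h he
        rw [hv]
        exact mem_image_Ioo 1 4 3.5 3.5 (by norm_num) (by norm_num) (by norm_num)
      · have hv : R i = 1.5 := by simp [hRdef, Rv, hp]; exact fun h => absurd h he
        rw [hv]
        exact mem_image_Ioo 1 4 1.5 1.5 (by norm_num) (by norm_num) (by norm_num)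
    | inr i =>
      show ((R i - R (i - 1) : ℝ) : AddCircle (5:ℝ)) ∈ _
      have hx : Sum.inl (i - 1) ∈ J ↔ Sum.inl i ∈ J := by
        by_contra hcon
        exact he ((key i).mpr hcon)
      by_cases hb : Sum.inl i ∈ J <;> by_cases hp : i.val % 2 = 0
      · -- both in J, i even : 0.9 - 4.1 = -3.2
        have ha : Sum.inl (i - 1) ∈ J := hx.mpr hb
        have hp' : ¬ ((i - 1).val % 2 = 0) := by have := hpar i; omega
        have hv : R i - R (i - 1) = -3.2 := by
          simp [hRdef, Rv, ha, hb, hp, hp']; norm_num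
        rw [hv]
        exact mem_image_Ioo 1 4 (-3.2) 1.8 (by norm_num) (by norm_num) (by norm_num)
      · -- both in J, i odd : 4.1 - 0.9 = 3.2
        have ha : Sum.inl (i - 1) ∈ J := hx.mpr hb
        have hp' : (i - 1).val % 2 = 0 := by have := hpar i; omega
        have hv : R i - R (i - 1) = 3.2 := by
          simp [hRdef, Rv, ha, hb, hp, hp']; norm_num
        rw [hv]
        exact mem_image_Ioo 1 4 3.2 3.2 (by norm_num) (by norm_num) (by norm_num)
      · -- neither, i even : 3.5 - 1.5 = 2
        have ha : Sum.inl (i - 1) ∉ J := fun h => hb (hx.mp h)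
        have hp' : ¬ ((i - 1).val % 2 = 0) := by have := hpar i; omega
        have hv : R i - R (i - 1) = 2 := by
          simp [hRdef, Rv, ha, hb, hp, hp']; norm_num
        rw [hv]
        exact mem_image_Ioo 1 4 2 2 (by norm_num) (by norm_num) (by norm_num)
      · -- neither, i odd : 1.5 - 3.5 = -2
        have ha : Sum.inl (i - 1) ∉ J := fun h => hb (hx.mp h)
        have hp' : (i - 1).val % 2 = 0 := by have := hpar i; omega
        have hv : R i - R (i - 1) = -2 := by
          simp [hRdef, Rv, ha, hb, hp, hp']; norm_num
        rw [hv]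
        exact mem_image_Ioo 1 4 (-2) 3 (by norm_num) (by norm_num) (by norm_num)
end
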